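/- arXiv:2111.11176 — 6 statements merged into one kernel-verified Lean document; each statement's English description precedes it below -/
import Mathlib

section
/- Let T ≥ 1, let c : Fin T → ℤ be a vector with all entries in {−1,0,1} and let d : Fin T → ℤ be a vector with all entries in {0,1}. Let N₋₁ be the number of indices i with c(i) = −1, and let wt(c), wt(d) denote the numbers of nonzero entries of c and d. If Σ_{i<T} c(i)·2^i = Σ_{i<T} d(i)·2^i, then wt(c) − N₋₁ ≤ wt(d) ≤ T − N₋₁. -/
open Finset

private lemma sum_d_bounds (n : ℕ) (d : ℕ → ℤ) (hd : ∀ i < n, d i = 0 ∨ d i = 1) :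
    0 ≤ ∑ i ∈ range n, d i * 2 ^ i ∧ ∑ i ∈ range n, d i * 2 ^ i ≤ 2 ^ n - 1 := by
  induction n with
  | zero => simp
  | succ n ih =>
    obtain ⟨h1, h2⟩ := ih (fun i hi => hd i (by omega))
    have h3 := hd n (by omega)
    have hp : (0:ℤ) < 2 ^ n := by positivity
    rw [Finset.sum_range_succ, pow_succ]
    rcases h3 with h | h <;> rw [h] <;> constructor <;> linarith

private lemma sum_c_bounds (n : ℕ) (c : ℕ → ℤ) (hc : ∀ i < n, c i = -1 ∨ c i = 0 ∨ c i = 1) :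
    -(2 ^ n - 1) ≤ ∑ i ∈ range n, c i * 2 ^ i ∧ ∑ i ∈ range n, c i * 2 ^ i ≤ 2 ^ n - 1 := by
  induction n with
  | zero => simp
  | succ n ih =>
    obtain ⟨h1, h2⟩ := ih (fun i hi => hc i (by omega))
    have h3 := hc n (by omega)
    have hp : (0:ℤ) < 2 ^ n := by positivity
    rw [Finset.sum_range_succ, pow_succ]
    rcases h3 with h | h | h <;> rw [h] <;> constructor <;> linarith

private lemma card_filter_range_succ (p : ℕ → Prop) [DecidablePred p] (n : ℕ) :
    ((range (n+1)).filter p).card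
      = ((range n).filter p).card + if p n then 1 else 0 := by
  rw [Finset.range_add_one, Finset.filter_insert]
  by_cases h : p n
  · rw [if_pos h, if_pos h, Finset.card_insert_of_notMem (by simp)]
  · rw [if_neg h, if_neg h, add_zero]

private lemma aux_carry (T : ℕ) : ∀ (c d : ℕ → ℤ) (e : ℕ), e ≤ 1 →
    (∀ i < T, c i = -1 ∨ c i = 0 ∨ c i = 1) → (∀ i < T, d i = 0 ∨ d i = 1) →
    (∑ i ∈ range T, c i * 2 ^ i) + (e : ℤ) * 2 ^ T = ∑ i ∈ range T, d i * 2 ^ i →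
    ((range T).filter (fun i => c i = 1)).card + e ≤ ((range T).filter (fun i => d i = 1)).card
    ∧ ((range T).filter (fun i => d i = 1)).card + ((range T).filter (fun i => c i = -1)).card
        ≤ T + e := by
  induction T with
  | zero =>
    intro c d e he hc hd hsum
    simp only [Finset.range_zero, Finset.sum_empty, Finset.filter_empty, Finset.card_empty,
      pow_zero, mul_one, zero_add] at hsum ⊢
    omega
  | succ T ih =>
    intro c d e he hc hd hsum
    obtain ⟨hc1, hc2⟩ := sum_c_bounds T c (fun i hi => hc i (by omega))
    obtain ⟨hd1, hd2⟩ := sum_d_bounds T d (fun i hi => hd i (by omega))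
    rw [Finset.sum_range_succ, Finset.sum_range_succ, pow_succ] at hsum
    have ha := hc T (by omega)
    have hb := hd T (by omega)
    have hpow : (0:ℤ) < 2 ^ T := by positivity
    have h1 : (c T + 2 * e - d T) * 2 ^ T
        = ∑ i ∈ range T, d i * 2 ^ i - ∑ i ∈ range T, c i * 2 ^ i := by
      ring_nf
      ring_nf at hsum
      linarith
    have he'1 : 0 ≤ c T + 2 * e - d T := by
      by_contra h
      push_neg at h
      have h2 : c T + 2 * (e:ℤ) - d T ≤ -1 := by omega
      have h3 : (c T + 2 * e - d T) * 2 ^ T ≤ -1 * 2 ^ T :=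
        mul_le_mul_of_nonneg_right h2 (le_of_lt hpow)
      linarith
    have he'2 : c T + 2 * e - d T ≤ 1 := by
      by_contra h
      push_neg at h
      have h2 : (2:ℤ) ≤ c T + 2 * (e:ℤ) - d T := by omega
      have h3 : (2:ℤ) * 2 ^ T ≤ (c T + 2 * e - d T) * 2 ^ T :=
        mul_le_mul_of_nonneg_right h2 (le_of_lt hpow)
      linarith
    set e' : ℕ := (c T + 2 * e - d T).toNat with he'def
    have hE : (e' : ℤ) = c T + 2 * e - d T := Int.toNat_of_nonneg he'1
    have he'le : e' ≤ 1 := by omega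
    have hsum' : (∑ i ∈ range T, c i * 2 ^ i) + (e' : ℤ) * 2 ^ T
        = ∑ i ∈ range T, d i * 2 ^ i := by
      rw [hE]; linarith
    obtain ⟨ih1, ih2⟩ := ih c d e' he'le (fun i hi => hc i (by omega))
      (fun i hi => hd i (by omega)) hsum'
    have Hc1 := card_filter_range_succ (fun i => c i = 1) T
    have Hc2 := card_filter_range_succ (fun i => c i = -1) T
    have Hd1 := card_filter_range_succ (fun i => d i = 1) T
    rw [Hc1, Hc2, Hd1]
    rcases ha with h | h | h <;> rcases hb with h' | h' <;>
      simp only [h, h'] at hE ⊢ <;> norm_num <;> omega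

private lemma card_filter_fin {T : ℕ} (f : Fin T → ℤ) (F : ℕ → ℤ)
    (hfF : ∀ i : Fin T, f i = F i.val) (p : ℤ → Prop) [DecidablePred p] :
    (univ.filter (fun i => p (f i))).card = ((range T).filter (fun i => p (F i))).card := by
  rw [Finset.card_filter, Finset.card_filter,
    ← Fin.sum_univ_eq_sum_range (fun i => if p (F i) then 1 else 0) T]
  exact Finset.sum_congr rfl fun i _ => by rw [hfF i]

/-- If `c ∈ {-1,0,1}^T` and `d ∈ {0,1}^T` represent the same integer in base 2,
i.e. `Σ_{i<T} c i · 2^i = Σ_{i<T} d i · 2^i`, then with `N₋₁ = #{i : c i = -1}`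
one has `wt c - N₋₁ ≤ wt d ≤ T - N₋₁`, where `wt` counts nonzero entries. -/
theorem weight_bound_of_signed_binary_eq (T : ℕ) (hT : 1 ≤ T) (c d : Fin T → ℤ)
    (hc : ∀ i, c i = -1 ∨ c i = 0 ∨ c i = 1) (hd : ∀ i, d i = 0 ∨ d i = 1)
    (hsum : ∑ i : Fin T, c i * 2 ^ (i : ℕ) = ∑ i : Fin T, d i * 2 ^ (i : ℕ)) :
    ((Finset.univ.filter (fun i => c i ≠ 0)).card : ℤ)
        - ((Finset.univ.filter (fun i => c i = -1)).card : ℤ)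
      ≤ ((Finset.univ.filter (fun i => d i ≠ 0)).card : ℤ)
    ∧ ((Finset.univ.filter (fun i => d i ≠ 0)).card : ℤ)
      ≤ (T : ℤ) - ((Finset.univ.filter (fun i => c i = -1)).card : ℤ) := by
  classical
  set C : ℕ → ℤ := fun i => if h : i < T then c ⟨i, h⟩ else 0 with hCdef
  set D : ℕ → ℤ := fun i => if h : i < T then d ⟨i, h⟩ else 0 with hDdef
  have hCi : ∀ i : Fin T, c i = C i.val := fun i => by simp [hCdef, i.isLt]
  have hDi : ∀ i : Fin T, d i = D i.val := fun i => by simp [hDdef, i.isLt]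
  have hC' : ∀ i < T, C i = -1 ∨ C i = 0 ∨ C i = 1 := by
    intro i hi
    have := hc ⟨i, hi⟩
    simpa [hCdef, hi] using this
  have hD' : ∀ i < T, D i = 0 ∨ D i = 1 := by
    intro i hi
    have := hd ⟨i, hi⟩
    simpa [hDdef, hi] using this
  have hsum' : (∑ i ∈ range T, C i * 2 ^ i) + ((0:ℕ) : ℤ) * 2 ^ T
      = ∑ i ∈ range T, D i * 2 ^ i := by
    rw [← Fin.sum_univ_eq_sum_range (fun i => C i * 2 ^ i) T,
      ← Fin.sum_univ_eq_sum_range (fun i => D i * 2 ^ i) T]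
    push_cast
    rw [zero_mul, add_zero]
    calc ∑ i : Fin T, C i.val * 2 ^ (i : ℕ) = ∑ i : Fin T, c i * 2 ^ (i : ℕ) := by
          exact Finset.sum_congr rfl fun i _ => by rw [hCi i]
      _ = ∑ i : Fin T, d i * 2 ^ (i : ℕ) := hsum
      _ = ∑ i : Fin T, D i.val * 2 ^ (i : ℕ) :=
          Finset.sum_congr rfl fun i _ => by rw [hDi i]
  obtain ⟨H1, H2⟩ := aux_carry T C D 0 (by omega) hC' hD' hsum'
  have EC1 := card_filter_fin c C hCi (fun x => x = 1)
  have EC2 := card_filter_fin c C hCi (fun x => x = -1)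
  have EC0 := card_filter_fin c C hCi (fun x => x ≠ 0)
  have ED0 := card_filter_fin d D hDi (fun x => x ≠ 0)
  have ED1 := card_filter_fin d D hDi (fun x => x = 1)
  -- split wt(c)
  have hsplitC : ((range T).filter (fun i => C i ≠ 0)).card
      = ((range T).filter (fun i => C i = 1)).card
        + ((range T).filter (fun i => C i = -1)).card := by
    rw [← Finset.card_union_of_disjoint (by
      rw [Finset.disjoint_left]
      intro i hi1 hi2
      simp only [Finset.mem_filter] at hi1 hi2
      omega)]
    congr 1
    rw [← Finset.filter_or]
    apply Finset.filter_congr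
    intro i hi
    have := hC' i (Finset.mem_range.mp hi)
    constructor
    · intro h; rcases this with h' | h' | h' <;> simp [h'] at h ⊢
    · intro h; rcases h with h | h <;> simp [h]
  have hsplitD : ((range T).filter (fun i => D i ≠ 0)).card
      = ((range T).filter (fun i => D i = 1)).card := by
    congr 1
    apply Finset.filter_congr
    intro i hi
    have := hD' i (Finset.mem_range.mp hi)
    constructor
    · intro h; rcases this with h' | h' <;> simp [h'] at h ⊢
    · intro h; simp [h]
  rw [EC0, EC2, ED0, hsplitC, hsplitD]
  have hcard : ((range T).filter (fun i => C i = -1)).card ≤ T := by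
    calc _ ≤ (range T).card := Finset.card_filter_le _ _
      _ = T := Finset.card_range T
  omega
end

section
/- Let n ≥ 2 and T = 2^n − 1, and let s : ℕ → ZMod 2 be a T-periodic binary sequence that is balanced and has the shift-and-add property. For 1 ≤ τ < T, consider the integer vector (m(i) − m(i+τ))_{i<T} ∈ {−1,0,1}^T, where m(i) ∈ {0,1} ⊂ ℤ is the integer lift of s(i). Then this vector has exactly 2^{n−2} entries equal to 1, exactly 2^{n−2} entries equal to −1, and exactly 2^{n−1} − 1 entries equal to 0. -/
private lemma zmod2_sub_eq_one : ∀ a b : ZMod 2,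
    (((a.val : ℤ) - b.val = 1) ↔ (a = 1 ∧ ¬ b = 1)) := by decide

private lemma zmod2_sub_eq_neg_one : ∀ a b : ZMod 2,
    (((a.val : ℤ) - b.val = -1) ↔ (¬ a = 1 ∧ b = 1)) := by decide

private lemma zmod2_sub_eq_zero : ∀ a b : ZMod 2,
    (((a.val : ℤ) - b.val = 0) ↔ a = b) := by decide

private lemma zmod2_add_eq_one : ∀ a b : ZMod 2, (a + b = 1 ↔ ¬ (a = b)) := by decide

/-- Let `T = 2^n - 1` (with `n ≥ 2`) and let `s : ℕ → ZMod 2` be a `T`-periodic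
sequence which is balanced and has the shift-and-add property. With
`m i = (s i).val ∈ {0,1} ⊆ ℤ`, for each `1 ≤ τ < T` the vector
`(m i - m (i+τ))_{i<T} ∈ {-1,0,1}^T` has exactly `2^(n-2)` entries `1`,
exactly `2^(n-2)` entries `-1` and exactly `2^(n-1) - 1` entries `0`. -/
theorem binary_sub_distribution_of_shift_and_add (n : ℕ) (hn : 2 ≤ n)
    (T : ℕ) (hT : T = 2 ^ n - 1) (s : ℕ → ZMod 2)
    (hper : ∀ i, s (i + T) = s i)
    (hbal : ((Finset.range T).filter (fun i => s i = 1)).card = 2 ^ (n - 1))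
    (hsaa : ∀ τ, 1 ≤ τ → τ < T → ∃ τ', τ' < T ∧ ∀ i, s i + s (i + τ) = s (i + τ')) :
    ∀ τ, 1 ≤ τ → τ < T →
      ((Finset.range T).filter
        (fun i => ((s i).val : ℤ) - ((s (i + τ)).val : ℤ) = 1)).card = 2 ^ (n - 2)
      ∧ ((Finset.range T).filter
        (fun i => ((s i).val : ℤ) - ((s (i + τ)).val : ℤ) = -1)).card = 2 ^ (n - 2)
      ∧ ((Finset.range T).filter
        (fun i => ((s i).val : ℤ) - ((s (i + τ)).val : ℤ) = 0)).card = 2 ^ (n - 1) - 1 := by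
  intro τ hτ1 hτT
  have h4 : 4 ≤ 2 ^ n := by
    calc (4 : ℕ) = 2 ^ 2 := by norm_num
    _ ≤ 2 ^ n := Nat.pow_le_pow_right (by norm_num) hn
  have hT0 : 0 < T := by omega
  -- general periodicity
  have hper' : ∀ k i, s (i + k * T) = s i := by
    intro k
    induction k with
    | zero => intro i; simp
    | succ k ih =>
      intro i
      have : i + (k + 1) * T = (i + k * T) + T := by ring
      rw [this, hper, ih]
  have hmod : ∀ i, s i = s (i % T) := by
    intro i
    conv_lhs => rw [← Nat.mod_add_div i T]
    rw [show i % T + T * (i / T) = i % T + (i / T) * T by ring, hper']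
  -- shift invariance of the count of ones
  have hcount : ∀ t, ((Finset.range T).filter (fun i => s (i + t) = 1)).card = 2 ^ (n - 1) := by
    intro t
    rw [← hbal]
    have hdm := Nat.div_add_mod t T
    have hml : t % T < T := Nat.mod_lt t hT0
    set u := T - t % T with hu
    have hkey : ∀ x : ℕ, (x + t + u) % T = x % T := by
      intro x
      have e1 : T * (t / T + 1) = T * (t / T) + T := by ring
      have : x + t + u = x + T * (t / T + 1) := by rw [e1]; omega
      rw [this, Nat.add_mul_mod_self_left]
    have hkey' : ∀ x : ℕ, (x + u + t) % T = x % T := by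
      intro x
      rw [show x + u + t = x + t + u by ring, hkey]
    apply Finset.card_bij' (fun i _ => (i + t) % T) (fun j _ => (j + u) % T)
    · intro a ha
      simp only [Finset.mem_filter, Finset.mem_range] at ha ⊢
      exact ⟨Nat.mod_lt _ hT0, by rw [← hmod]; exact ha.2⟩
    · intro b hb
      simp only [Finset.mem_filter, Finset.mem_range] at hb ⊢
      refine ⟨Nat.mod_lt _ hT0, ?_⟩
      rw [hmod ((b + u) % T + t), Nat.mod_add_mod, hkey', ← hmod]
      exact hb.2
    · intro a ha
      simp only [Finset.mem_filter, Finset.mem_range] at ha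
      rw [Nat.mod_add_mod, hkey, Nat.mod_eq_of_lt ha.1]
    · intro b hb
      simp only [Finset.mem_filter, Finset.mem_range] at hb
      rw [Nat.mod_add_mod, hkey', Nat.mod_eq_of_lt hb.1]
  -- the number of disagreements is 2^(n-1)
  obtain ⟨τ', hτ'T, hτ'⟩ := hsaa τ hτ1 hτT
  have hD : ((Finset.range T).filter (fun i => ¬ (s i = s (i + τ)))).card = 2 ^ (n - 1) := by
    rw [← hcount τ']
    apply congrArg Finset.card
    apply Finset.filter_congr
    intro i _
    simp only [← hτ' i, zmod2_add_eq_one]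
  -- split counts
  have hsplit1 : ((Finset.range T).filter (fun i => s i = 1 ∧ ¬ s (i + τ) = 1)).card
      + ((Finset.range T).filter (fun i => s i = 1 ∧ s (i + τ) = 1)).card = 2 ^ (n - 1) := by
    rw [← hbal]
    rw [show (Finset.range T).filter (fun i => s i = 1 ∧ ¬ s (i + τ) = 1)
        = ((Finset.range T).filter (fun i => s i = 1)).filter (fun i => ¬ s (i + τ) = 1) by
      rw [Finset.filter_filter]]
    rw [show (Finset.range T).filter (fun i => s i = 1 ∧ s (i + τ) = 1)
        = ((Finset.range T).filter (fun i => s i = 1)).filter (fun i => s (i + τ) = 1) by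
      rw [Finset.filter_filter]]
    rw [Nat.add_comm]
    exact Finset.card_filter_add_card_filter_not (fun i => s (i + τ) = 1)
  have hsplit2 : ((Finset.range T).filter (fun i => ¬ s i = 1 ∧ s (i + τ) = 1)).card
      + ((Finset.range T).filter (fun i => s i = 1 ∧ s (i + τ) = 1)).card = 2 ^ (n - 1) := by
    rw [← hcount τ]
    rw [show (Finset.range T).filter (fun i => ¬ s i = 1 ∧ s (i + τ) = 1)
        = ((Finset.range T).filter (fun i => s (i + τ) = 1)).filter (fun i => ¬ s i = 1) by
      rw [Finset.filter_filter]; apply Finset.filter_congr; intro i _; tauto]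
    rw [show (Finset.range T).filter (fun i => s i = 1 ∧ s (i + τ) = 1)
        = ((Finset.range T).filter (fun i => s (i + τ) = 1)).filter (fun i => s i = 1) by
      rw [Finset.filter_filter]; apply Finset.filter_congr; intro i _; tauto]
    rw [Nat.add_comm]
    exact Finset.card_filter_add_card_filter_not (fun i => s i = 1)
  have hDsplit : ((Finset.range T).filter (fun i => s i = 1 ∧ ¬ s (i + τ) = 1)).card
      + ((Finset.range T).filter (fun i => ¬ s i = 1 ∧ s (i + τ) = 1)).card = 2 ^ (n - 1) := by
    rw [← hD]
    have hrw : (Finset.range T).filter (fun i => ¬ (s i = s (i + τ)))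
        = (Finset.range T).filter
            (fun i => (s i = 1 ∧ ¬ s (i + τ) = 1) ∨ (¬ s i = 1 ∧ s (i + τ) = 1)) := by
      apply Finset.filter_congr
      intro i _
      constructor
      · intro h
        revert h
        have := zmod2_add_eq_one (s i) (s (i + τ))
        rcases (by decide : ∀ a : ZMod 2, a = 0 ∨ a = 1) (s i) with h1 | h1 <;>
          rcases (by decide : ∀ a : ZMod 2, a = 0 ∨ a = 1) (s (i + τ)) with h2 | h2 <;>
          simp [h1, h2]
      · rintro (⟨h1, h2⟩ | ⟨h1, h2⟩) <;> intro h <;> rw [h] at h1 <;> tauto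
    rw [hrw, Finset.filter_or]
    rw [Finset.card_union_of_disjoint]
    rw [Finset.disjoint_filter]
    tauto
  -- conclude
  have hpow1 : 2 ^ (n - 1) = 2 * 2 ^ (n - 2) := by
    rw [← pow_succ']
    congr 1
    omega
  have hpow0 : 2 ^ n = 2 * 2 ^ (n - 1) := by
    rw [← pow_succ']
    congr 1
    omega
  have e1 : (Finset.range T).filter (fun i => ((s i).val : ℤ) - ((s (i + τ)).val : ℤ) = 1)
      = (Finset.range T).filter (fun i => s i = 1 ∧ ¬ s (i + τ) = 1) := by
    apply Finset.filter_congr; intro i _; exact zmod2_sub_eq_one _ _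
  have e2 : (Finset.range T).filter (fun i => ((s i).val : ℤ) - ((s (i + τ)).val : ℤ) = -1)
      = (Finset.range T).filter (fun i => ¬ s i = 1 ∧ s (i + τ) = 1) := by
    apply Finset.filter_congr; intro i _; exact zmod2_sub_eq_neg_one _ _
  have e0 : (Finset.range T).filter (fun i => ((s i).val : ℤ) - ((s (i + τ)).val : ℤ) = 0)
      = (Finset.range T).filter (fun i => s i = s (i + τ)) := by
    apply Finset.filter_congr; intro i _; exact zmod2_sub_eq_zero _ _
  have hzero : ((Finset.range T).filter (fun i => s i = s (i + τ))).card
      + ((Finset.range T).filter (fun i => ¬ (s i = s (i + τ)))).card = T := by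
    rw [Finset.card_filter_add_card_filter_not, Finset.card_range]
  rw [e1, e2, e0]
  refine ⟨by omega, by omega, by omega⟩
end

section
/- Let n ≥ 2 and T = 2^n − 1, and let s : ℕ → ZMod 2 be a T-periodic binary sequence that is balanced and has the shift-and-add property. For 1 ≤ τ < T, set A = Σ_{i<T} m(i)·2^i and B = Σ_{i<T} m(i+τ)·2^i, where m(i) ∈ {0,1} ⊂ ℤ is the integer lift of s(i), and let N₁ be the number of indices k < T such that the k-th binary digit of the natural number |A − B| equals 1. Then 2^{n−2} ≤ N₁ ≤ 3·2^{n−2} − 1. -/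
open Finset

private def wtAux (n : ℕ) : ℕ := (Nat.digits 2 n).sum

private lemma wtAux_two_mul_add (k r : ℕ) (hr : r ≤ 1) : wtAux (2 * k + r) = wtAux k + r := by
  rcases Nat.eq_zero_or_pos (2 * k + r) with h | h
  · have hk : k = 0 := by omega
    have hr0 : r = 0 := by omega
    simp [hk, hr0, wtAux]
  · unfold wtAux
    rw [Nat.digits_def' (by norm_num : 1 < 2) (by omega)]
    simp only [List.sum_cons]
    have h1 : (2 * k + r) % 2 = r := by omega
    have h2 : (2 * k + r) / 2 = k := by omega
    rw [h1, h2]; omega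

private lemma card_testBit_eq_wtAux : ∀ (t x : ℕ), x < 2 ^ t →
    ((range t).filter (fun k => x.testBit k = true)).card = wtAux x := by
  intro t
  induction t with
  | zero =>
    intro x hx
    have : x = 0 := by simpa using hx
    simp [this, wtAux]
  | succ t ih =>
    intro x hx
    have hx2 : x / 2 < 2 ^ t := by
      have h2 : (2:ℕ)^(t+1) = 2 * 2^t := by ring
      omega
    rw [Finset.card_filter, Finset.sum_range_succ']
    have h1 : ∀ i, (if x.testBit (i+1) = true then 1 else 0) = (if (x/2).testBit i = true then 1 else 0) := by
      intro i; rw [Nat.testBit_add_one]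
    rw [Finset.sum_congr rfl (fun i _ => h1 i), ← Finset.card_filter, ih _ hx2]
    have h0 : (if x.testBit 0 = true then 1 else 0) = x % 2 := by
      rcases Nat.mod_two_eq_zero_or_one x with h | h <;> simp [Nat.testBit_zero, h]
    rw [h0]
    have h3 := wtAux_two_mul_add (x/2) (x%2) (by omega)
    rw [show 2 * (x/2) + x % 2 = x by omega] at h3
    omega

private lemma peelAux (g : ℕ → ℕ) (t : ℕ) :
    ∑ i ∈ range (t+1), g i * 2 ^ i = 2 * (∑ i ∈ range t, g (i+1) * 2 ^ i) + g 0 := by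
  rw [Finset.sum_range_succ' (fun i => g i * 2 ^ i) t, Finset.mul_sum]
  congr 1
  · exact Finset.sum_congr rfl (fun i _ => by ring)
  · simp

private lemma keyAux : ∀ (t : ℕ) (g h : ℕ → ℕ) (e : ℕ),
    (∀ i, g i ≤ 1) → (∀ i, h i ≤ 1) → (∀ i, g i = 0 ∨ h i = 0) → e ≤ 1 →
    (∑ i ∈ range t, h i * 2 ^ i) + e ≤ ∑ i ∈ range t, g i * 2 ^ i →
    (∑ i ∈ range t, g i) ≤ wtAux ((∑ i ∈ range t, g i * 2 ^ i) - (∑ i ∈ range t, h i * 2 ^ i) - e) + e ∧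
    wtAux ((∑ i ∈ range t, g i * 2 ^ i) - (∑ i ∈ range t, h i * 2 ^ i) - e) + (∑ i ∈ range t, h i) + e ≤ t := by
  intro t
  induction t with
  | zero =>
    intro g h e hg hh hgh he hle
    simp only [range_zero, Finset.sum_empty] at hle ⊢
    have he0 : e = 0 := by omega
    subst he0
    simp [wtAux]
  | succ t ih =>
    intro g h e hg hh hgh he hle
    have hg0 := hg 0; have hh0 := hh 0; have hgh0 := hgh 0
    set A' := ∑ i ∈ range t, g (i+1) * 2 ^ i with hA'
    set B' := ∑ i ∈ range t, h (i+1) * 2 ^ i with hB'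
    have hA := peelAux g t
    have hB := peelAux h t
    rw [hA, hB] at hle ⊢
    set e' : ℕ := if g 0 < h 0 + e then 1 else 0 with he'
    set d0 : ℕ := (g 0 + h 0 + e) % 2 with hd0
    have he'le : e' ≤ 1 := by rw [he']; split_ifs <;> omega
    have hd0le : d0 ≤ 1 := by omega
    have hle' : B' + e' ≤ A' := by rw [he']; split_ifs <;> omega
    have hdec : (2 * A' + g 0) - (2 * B' + h 0) - e = 2 * (A' - B' - e') + d0 := by
      rw [he']; split_ifs <;> omega
    rw [hdec, wtAux_two_mul_add _ _ hd0le]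
    obtain ⟨ihl, ihu⟩ := ih (fun i => g (i+1)) (fun i => h (i+1)) e'
      (fun i => hg (i+1)) (fun i => hh (i+1)) (fun i => hgh (i+1)) he'le hle'
    rw [← hA', ← hB'] at ihl ihu
    rw [Finset.sum_range_succ' g t, Finset.sum_range_succ' h t]
    constructor
    · have : g 0 + e' ≤ d0 + e := by rw [he', hd0]; split_ifs <;> omega
      omega
    · have : d0 + h 0 + e ≤ 1 + e' := by rw [he', hd0]; split_ifs <;> omega
      omega

private lemma wtAux_sum : ∀ (t : ℕ) (g : ℕ → ℕ), (∀ i, g i ≤ 1) →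
    wtAux (∑ i ∈ range t, g i * 2 ^ i) = ∑ i ∈ range t, g i := by
  intro t
  induction t with
  | zero => intro g hg; simp [wtAux]
  | succ t ih =>
    intro g hg
    rw [peelAux g t, wtAux_two_mul_add _ _ (hg 0), ih (fun i => g (i+1)) (fun i => hg (i+1)),
      Finset.sum_range_succ' g t]

private lemma sum_pow_lt : ∀ (t : ℕ) (g : ℕ → ℕ), (∀ i, g i ≤ 1) →
    (∑ i ∈ range t, g i * 2 ^ i) < 2 ^ t := by
  intro t
  induction t with
  | zero => intro g hg; simp
  | succ t ih =>
    intro g hg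
    rw [peelAux g t]
    have h1 : (∑ i ∈ range t, g (i+1) * 2 ^ i) < 2 ^ t := ih (fun i => g (i+1)) (fun i => hg (i+1))
    have h2 := hg 0
    have : (2:ℕ)^(t+1) = 2 * 2^t := by ring
    omega

private lemma sum_shiftAux (T : ℕ) (f : ℕ → ℕ) (hf : ∀ i, f (i + T) = f i) :
    ∀ c, ∑ i ∈ range T, f (i + c) = ∑ i ∈ range T, f i := by
  intro c
  induction c with
  | zero => simp
  | succ c ih =>
    have h1 : ∑ i ∈ range T, f (i + (c+1)) = ∑ i ∈ range T, (fun j => f (j + c)) (i+1) := by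
      exact Finset.sum_congr rfl (fun i _ => by rw [show i + (c+1) = (i+1) + c by omega])
    have h2 := Finset.sum_range_succ' (fun j => f (j + c)) T
    have h3 := Finset.sum_range_succ (fun j => f (j + c)) T
    have h4 : f (T + c) = f (0 + c) := by
      rw [show T + c = c + T by omega, hf c, show (0:ℕ) + c = c by omega]
    rw [h1]
    simp only at h2 h3 ih ⊢
    omega

private lemma zmod2_cases (x : ZMod 2) : x = 0 ∨ x = 1 := by revert x; decide

/-- Let `T = 2^n - 1` (with `n ≥ 2`) and let `s : ℕ → ZMod 2` be a `T`-periodic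
sequence which is balanced and has the shift-and-add property. For `1 ≤ τ < T`,
set `A = Σ_{i<T} m i · 2^i` and `B = Σ_{i<T} m (i+τ) · 2^i` where
`m i = (s i).val ∈ {0,1} ⊆ ℤ`, and let `N₁` be the number of `k < T` whose
`k`-th binary digit of `|A - B|` equals `1`. Then `2^(n-2) ≤ N₁ ≤ 3·2^(n-2) - 1`. -/
theorem digit_count_bound_of_shift_and_add (n : ℕ) (hn : 2 ≤ n)
    (T : ℕ) (hT : T = 2 ^ n - 1) (s : ℕ → ZMod 2)
    (hper : ∀ i, s (i + T) = s i)
    (hbal : ((Finset.range T).filter (fun i => s i = 1)).card = 2 ^ (n - 1))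
    (hsaa : ∀ τ, 1 ≤ τ → τ < T → ∃ τ', τ' < T ∧ ∀ i, s i + s (i + τ) = s (i + τ')) :
    ∀ τ, 1 ≤ τ → τ < T →
      2 ^ (n - 2) ≤
        ((Finset.range T).filter
          (fun k => ((∑ i ∈ Finset.range T, ((s i).val : ℤ) * 2 ^ i)
            - ∑ i ∈ Finset.range T, ((s (i + τ)).val : ℤ) * 2 ^ i).natAbs.testBit k
              = true)).card
      ∧ ((Finset.range T).filter
          (fun k => ((∑ i ∈ Finset.range T, ((s i).val : ℤ) * 2 ^ i)
            - ∑ i ∈ Finset.range T, ((s (i + τ)).val : ℤ) * 2 ^ i).natAbs.testBit k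
              = true)).card ≤ 3 * 2 ^ (n - 2) - 1 := by
  intro τ hτ1 hτT
  obtain ⟨τ', hτ'T, hsum⟩ := hsaa τ hτ1 hτT
  -- indicator functions
  set g : ℕ → ℕ := fun i => if s i = 1 ∧ s (i + τ) = 0 then 1 else 0 with hgdef
  set h : ℕ → ℕ := fun i => if s i = 0 ∧ s (i + τ) = 1 then 1 else 0 with hhdef
  set kk : ℕ → ℕ := fun i => if s i = 1 ∧ s (i + τ) = 1 then 1 else 0 with hkkdef
  set fInd : ℕ → ℕ := fun i => if s i = 1 then 1 else 0 with hfdef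
  have hg : ∀ i, g i ≤ 1 := by intro i; simp only [hgdef]; split_ifs <;> omega
  have hh : ∀ i, h i ≤ 1 := by intro i; simp only [hhdef]; split_ifs <;> omega
  have hdisj : ∀ i, g i = 0 ∨ h i = 0 := by
    intro i; simp only [hgdef, hhdef]
    split_ifs with h1 h2 <;> simp_all
  have hfper : ∀ i, fInd (i + T) = fInd i := by
    intro i; simp only [hfdef, hper]
  -- counting
  have E1 : ∑ i ∈ range T, fInd i = 2 ^ (n-1) := by
    rw [← hbal, Finset.card_filter]
  have E2 : ∑ i ∈ range T, fInd (i + τ) = 2 ^ (n-1) := by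
    rw [sum_shiftAux T fInd hfper τ, E1]
  have E3 : ∑ i ∈ range T, fInd (i + τ') = 2 ^ (n-1) := by
    rw [sum_shiftAux T fInd hfper τ', E1]
  have hone : (1 : ZMod 2) + 1 = 0 := by decide
  have P1 : ∀ i, g i + kk i = fInd i := by
    intro i
    rcases zmod2_cases (s i) with hx | hx <;> rcases zmod2_cases (s (i+τ)) with hy | hy <;>
      simp [hgdef, hhdef, hkkdef, hfdef, hx, hy]
  have P2 : ∀ i, h i + kk i = fInd (i + τ) := by
    intro i
    rcases zmod2_cases (s i) with hx | hx <;> rcases zmod2_cases (s (i+τ)) with hy | hy <;>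
      simp [hgdef, hhdef, hkkdef, hfdef, hx, hy]
  have P3 : ∀ i, g i + h i = fInd (i + τ') := by
    intro i
    have hs := hsum i
    rcases zmod2_cases (s i) with hx | hx <;> rcases zmod2_cases (s (i+τ)) with hy | hy <;>
      rw [hx, hy] at hs <;>
      simp [hgdef, hhdef, hfdef, hx, hy, ← hs, hone]
  have hS1 : (∑ i ∈ range T, g i) + (∑ i ∈ range T, kk i) = 2 ^ (n-1) := by
    rw [← Finset.sum_add_distrib, Finset.sum_congr rfl (fun i _ => P1 i), E1]
  have hS2 : (∑ i ∈ range T, h i) + (∑ i ∈ range T, kk i) = 2 ^ (n-1) := by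
    rw [← Finset.sum_add_distrib, Finset.sum_congr rfl (fun i _ => P2 i), E2]
  have hS3 : (∑ i ∈ range T, g i) + (∑ i ∈ range T, h i) = 2 ^ (n-1) := by
    rw [← Finset.sum_add_distrib, Finset.sum_congr rfl (fun i _ => P3 i), E3]
  have hpow : (2:ℕ) ^ (n-1) = 2 * 2 ^ (n-2) := by
    rw [show n - 1 = (n-2) + 1 by omega, pow_succ]; ring
  have hSg : (∑ i ∈ range T, g i) = 2 ^ (n-2) := by omega
  have hSh : (∑ i ∈ range T, h i) = 2 ^ (n-2) := by omega
  -- integer identity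
  set a : ℕ := ∑ i ∈ range T, g i * 2 ^ i with hadef
  set b : ℕ := ∑ i ∈ range T, h i * 2 ^ i with hbdef
  have hD : (∑ i ∈ Finset.range T, ((s i).val : ℤ) * 2 ^ i)
      - (∑ i ∈ Finset.range T, ((s (i + τ)).val : ℤ) * 2 ^ i) = (a : ℤ) - b := by
    rw [hadef, hbdef]
    push_cast
    rw [← Finset.sum_sub_distrib, ← Finset.sum_sub_distrib]
    apply Finset.sum_congr rfl
    intro i _
    rw [← sub_mul, ← sub_mul]
    congr 1
    rcases zmod2_cases (s i) with hx | hx <;> rcases zmod2_cases (s (i+τ)) with hy | hy <;>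
      simp [hgdef, hhdef, hx, hy] <;> decide
  have haT : a < 2 ^ T := sum_pow_lt T g hg
  have hbT : b < 2 ^ T := sum_pow_lt T h hh
  have hq1 : 1 ≤ (2:ℕ) ^ (n-2) := Nat.one_le_two_pow
  have h4q : (2:ℕ) ^ n = 4 * 2 ^ (n-2) := by
    have hp : (2:ℕ)^((n-2)+2) = 2^(n-2) * 2^2 := pow_add 2 (n-2) 2
    rw [show (n-2)+2 = n by omega] at hp
    omega
  rcases le_total b a with hba | hab
  · -- a ≥ b
    have hnat : ((a : ℤ) - b).natAbs = a - b := by omega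
    obtain ⟨hl, hu⟩ := keyAux T g h 0 hg hh hdisj (by omega) (by omega)
    rw [← hadef, ← hbdef, Nat.sub_zero] at hl hu
    have hcard : ((Finset.range T).filter
        (fun k => ((∑ i ∈ Finset.range T, ((s i).val : ℤ) * 2 ^ i)
          - ∑ i ∈ Finset.range T, ((s (i + τ)).val : ℤ) * 2 ^ i).natAbs.testBit k
            = true)).card = wtAux (a - b) := by
      rw [hD, hnat]
      exact card_testBit_eq_wtAux T (a - b) (by omega)
    rw [hcard]
    constructor
    · omega
    · omega
  · -- b ≥ a
    have hnat : ((a : ℤ) - b).natAbs = b - a := by omega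
    obtain ⟨hl, hu⟩ := keyAux T h g 0 hh hg (fun i => (hdisj i).symm) (by omega) (by omega)
    rw [← hadef, ← hbdef, Nat.sub_zero] at hl hu
    have hcard : ((Finset.range T).filter
        (fun k => ((∑ i ∈ Finset.range T, ((s i).val : ℤ) * 2 ^ i)
          - ∑ i ∈ Finset.range T, ((s (i + τ)).val : ℤ) * 2 ^ i).natAbs.testBit k
            = true)).card = wtAux (b - a) := by
      rw [hD, hnat]
      exact card_testBit_eq_wtAux T (b - a) (by omega)
    rw [hcard]
    constructor
    · omega
    · omega
end

section
/- (Main theorem.) Let n ≥ 1 and T = 2^n − 1, and let s : ℕ → ZMod 2 be a T-periodic binary sequence that is balanced and has the shift-and-add property (in particular, any binary m-sequence of period 2^n − 1). Then for every shift τ with 1 ≤ τ < T, the arithmetic autocorrelation satisfies |A^A_s(τ)| = |T − 2·N₁| ≤ 2^{n−1} − 1, where N₁ is the number of indices k < T such that the k-th binary digit of |A − B| equals 1, with A = Σ_{i<T} m(i)·2^i and B = Σ_{i<T} m(i+τ)·2^i and m(i) ∈ {0,1} ⊂ ℤ the integer lift of s(i). -/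
set_option maxHeartbeats 1000000

open Finset

private lemma geom_int (j : ℕ) : ∑ i ∈ range j, (2:ℤ)^i = 2^j - 1 := by
  induction j with
  | zero => simp
  | succ j ih => rw [Finset.sum_range_succ, ih]; ring

private lemma sum01_nonneg {f : ℕ → ℤ} (hf : ∀ i, f i = 0 ∨ f i = 1) (j : ℕ) :
    0 ≤ ∑ i ∈ range j, f i * 2^i := by
  apply Finset.sum_nonneg
  intro i _
  rcases hf i with h | h <;> rw [h] <;> positivity

private lemma sum01_le {f : ℕ → ℤ} (hf : ∀ i, f i = 0 ∨ f i = 1) (j : ℕ) :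
    ∑ i ∈ range j, f i * 2^i ≤ 2^j - 1 := by
  have h1 : ∑ i ∈ range j, f i * 2^i ≤ ∑ i ∈ range j, (2:ℤ)^i := by
    apply Finset.sum_le_sum
    intro i _
    rcases hf i with h | h <;> rw [h]
    · have : (0:ℤ) ≤ 2^i := by positivity
      linarith
    · simp
  rw [geom_int] at h1
  exact h1

private lemma bits_eq : ∀ (k : ℕ) (x : ℕ), x < 2^k →
    ∑ i ∈ range k, (if x.testBit i then 2^i else 0) = x := by
  intro k
  induction k with
  | zero => intro x hx; simp at hx; simp [hx]
  | succ k ih =>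
    intro x hx
    rw [Finset.sum_range_succ']
    have h1 : ∀ i, (if x.testBit (i+1) then 2^(i+1) else 0)
        = 2 * (if (x/2).testBit i then 2^i else 0) := by
      intro i
      rw [Nat.testBit_succ]
      split <;> ring
    simp only [h1, ← Finset.mul_sum]
    have hx2 : x / 2 < 2^k := by
      have : 2^(k+1) = 2 * 2^k := by ring
      omega
    rw [ih (x/2) hx2]
    have h0 : (if x.testBit 0 then 2^0 else 0) = x % 2 := by
      rw [Nat.testBit_zero]
      rcases Nat.mod_two_eq_zero_or_one x with h | h <;> simp [h]
    rw [h0]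
    omega

private lemma card_filter_one (T : ℕ) (g : ℕ → ZMod 2) :
    ((((range T).filter (fun i => g i = 1)).card : ℤ)) = ∑ i ∈ range T, ((g i).val : ℤ) := by
  rw [Finset.card_filter]
  push_cast
  apply Finset.sum_congr rfl
  intro i _
  have h : ∀ x : ZMod 2, (if x = 1 then (1:ℤ) else 0) = (x.val : ℤ) := by decide
  exact h (g i)

private lemma sum_shift_one {T : ℕ} (f : ℕ → ℤ) (hf : ∀ i, f (i + T) = f i) :
    ∑ j ∈ range T, f (j + 1) = ∑ j ∈ range T, f j := by
  have h1 := Finset.sum_range_succ f T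
  have h2 := Finset.sum_range_succ' f T
  have h3 : f T = f 0 := by simpa using hf 0
  rw [h3] at h1
  linarith

private lemma sum_shift {T : ℕ} : ∀ (a : ℕ) (f : ℕ → ℤ), (∀ i, f (i + T) = f i) →
    ∑ j ∈ range T, f (j + a) = ∑ j ∈ range T, f j := by
  intro a
  induction a with
  | zero => intro f _; simp
  | succ a ih =>
    intro f hf
    have h1 : ∑ j ∈ range T, f (j + (a+1)) = ∑ j ∈ range T, (fun x => f (x + 1)) (j + a) := by
      apply Finset.sum_congr rfl
      intro j _
      rfl
    have hg : ∀ i, (fun x => f (x + 1)) (i + T) = (fun x => f (x + 1)) i := by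
      intro i
      show f (i + T + 1) = f (i + 1)
      rw [show i + T + 1 = i + 1 + T from by omega]
      exact hf (i+1)
    rw [h1, ih (fun x => f (x+1)) hg]
    exact sum_shift_one f hf

private lemma corr_lemma (n T : ℕ) (hn : 2 ≤ n) (hT : T = 2^n - 1) (s : ℕ → ZMod 2)
    (hper : ∀ i, s (i + T) = s i)
    (hbal : ((range T).filter (fun i => s i = 1)).card = 2^(n-1))
    (hsaa : ∀ τ, 1 ≤ τ → τ < T → ∃ τ', τ' < T ∧ ∀ i, s i + s (i + τ) = s (i + τ'))
    (a b : ℕ) (hab : a < b) (hbT : b - a < T) :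
    ∑ j ∈ range T, (((s (j+a)).val : ℤ) * ((s (j+b)).val : ℤ)) = 2^(n-2) := by
  have hmper : ∀ i, (((s (i + T)).val : ℤ)) = ((s i).val : ℤ) := fun i => by rw [hper i]
  have hbalZ : ∑ j ∈ range T, ((s j).val : ℤ) = 2^(n-1) := by
    have h := card_filter_one T s
    rw [hbal] at h
    push_cast at h
    linarith
  have hshift : ∀ c, ∑ j ∈ range T, ((s (j + c)).val : ℤ) = 2^(n-1) := by
    intro c
    rw [sum_shift c (fun i => ((s i).val : ℤ)) hmper]
    exact hbalZ
  obtain ⟨d', hd'T, hd'⟩ := hsaa (b - a) (by omega) hbT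
  have hid : ∀ j, ((s (j + (a + d'))).val : ℤ)
      = ((s (j+a)).val : ℤ) + ((s (j+b)).val : ℤ)
        - 2 * (((s (j+a)).val : ℤ) * ((s (j+b)).val : ℤ)) := by
    intro j
    have h1 := hd' (j + a)
    rw [show j + a + (b - a) = j + b from by omega] at h1
    have h3 : ∀ x y : ZMod 2, (((x + y).val : ℤ))
        = (x.val : ℤ) + (y.val : ℤ) - 2 * ((x.val : ℤ) * (y.val : ℤ)) := by decide
    rw [show j + (a + d') = j + a + d' from by omega, ← h1, h3]
  have hsum : ∑ j ∈ range T, ((s (j + (a + d'))).val : ℤ)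
      = (∑ j ∈ range T, ((s (j+a)).val : ℤ)) + (∑ j ∈ range T, ((s (j+b)).val : ℤ))
        - 2 * ∑ j ∈ range T, (((s (j+a)).val : ℤ) * ((s (j+b)).val : ℤ)) := by
    rw [Finset.mul_sum, ← Finset.sum_add_distrib, ← Finset.sum_sub_distrib]
    exact Finset.sum_congr rfl (fun j _ => hid j)
  rw [hshift (a + d'), hshift a, hshift b] at hsum
  have hp : (2:ℤ)^(n-1) = 2 * 2^(n-2) := by
    rw [show n - 1 = (n-2) + 1 from by omega, pow_succ]
    ring
  linarith

private lemma key_bounds (n T : ℕ) (hn : 2 ≤ n) (hT : T = 2 ^ n - 1) (s : ℕ → ZMod 2)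
    (hper : ∀ i, s (i + T) = s i)
    (hbal : ((Finset.range T).filter (fun i => s i = 1)).card = 2 ^ (n - 1))
    (hsaa : ∀ τ, 1 ≤ τ → τ < T → ∃ τ', τ' < T ∧ ∀ i, s i + s (i + τ) = s (i + τ'))
    (τ : ℕ) (hτ1 : 1 ≤ τ) (hτ2 : τ < T) :
    2 ^ (n - 2) ≤ ((Finset.range T).filter (fun k =>
        (((∑ i ∈ Finset.range T, ((s i).val : ℤ) * 2 ^ i)
          - ∑ i ∈ Finset.range T, ((s (i + τ)).val : ℤ) * 2 ^ i) % (2 ^ T - 1)).toNat.testBit k = true)).card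
    ∧ ((Finset.range T).filter (fun k =>
        (((∑ i ∈ Finset.range T, ((s i).val : ℤ) * 2 ^ i)
          - ∑ i ∈ Finset.range T, ((s (i + τ)).val : ℤ) * 2 ^ i) % (2 ^ T - 1)).toNat.testBit k = true)).card ≤ T - 2 ^ (n - 2) := by
  -- basic notation
  set m : ℕ → ℤ := fun i => ((s i).val : ℤ) with hm_def
  have hm01 : ∀ i, m i = 0 ∨ m i = 1 := by
    intro i
    have h : (s i).val < 2 := ZMod.val_lt (s i)
    simp only [hm_def]
    omega
  have hmper : ∀ i, m (i + T) = m i := fun i => by simp only [hm_def, hper i]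
  set A : ℤ := ∑ i ∈ Finset.range T, m i * 2 ^ i with hA_def
  set B : ℤ := ∑ i ∈ Finset.range T, m (i + τ) * 2 ^ i with hB_def
  set M : ℤ := 2 ^ T - 1 with hM_def
  have hT3 : 3 ≤ T := by
    have h4 : 4 ≤ 2 ^ n := by
      calc (4:ℕ) = 2 ^ 2 := by norm_num
        _ ≤ 2 ^ n := Nat.pow_le_pow_right (by norm_num) hn
    omega
  have h2T : (2:ℤ) ≤ 2 ^ T := by
    calc (2:ℤ) = 2 ^ 1 := by norm_num
      _ ≤ 2 ^ T := pow_le_pow_right₀ (by norm_num) (by omega)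
  have hMpos : 0 < M := by simp only [hM_def]; linarith
  -- balance as sums
  have hbalZ : ∑ j ∈ range T, m j = 2^(n-1) := by
    have h := card_filter_one T s
    rw [hbal] at h
    push_cast at h
    simp only [hm_def]
    linarith
  have hshift : ∀ c, ∑ j ∈ range T, m (j + c) = 2^(n-1) := by
    intro c
    rw [sum_shift c m hmper]
    exact hbalZ
  -- bounds for A, B
  have hA0 : 0 ≤ A := sum01_nonneg hm01 T
  have hA1 : A ≤ M := sum01_le hm01 T
  have hB0 : 0 ≤ B := sum01_nonneg (fun i => hm01 (i + τ)) T
  have hB1 : B ≤ M := sum01_le (fun i => hm01 (i + τ)) T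
  -- e and its bits
  set e : ℤ := (A - B) % M with he_def
  have he0 : 0 ≤ e := Int.emod_nonneg _ (ne_of_gt hMpos)
  have heM : e < M := Int.emod_lt_of_pos _ hMpos
  have hetoNat : ((e.toNat : ℤ)) = e := Int.toNat_of_nonneg he0
  have heT : e.toNat < 2 ^ T := by
    have h1 : e < (2:ℤ) ^ T := by
      have : M < 2 ^ T := by simp only [hM_def]; linarith
      linarith
    have h2 : ((e.toNat : ℤ)) < (((2^T : ℕ)) : ℤ) := by
      rw [hetoNat]
      push_cast
      exact h1
    exact_mod_cast h2
  set w : ℕ → ℤ := fun i => if e.toNat.testBit i then 1 else 0 with hw_def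
  have hw01 : ∀ i, w i = 0 ∨ w i = 1 := by
    intro i
    simp only [hw_def]
    split <;> simp
  have hsumw : ∑ i ∈ range T, w i * 2 ^ i = e := by
    have h := bits_eq T e.toNat heT
    have h2 : ((∑ i ∈ range T, (if e.toNat.testBit i then 2^i else 0) : ℕ) : ℤ) = (e.toNat : ℤ) := by
      exact_mod_cast congrArg (Nat.cast : ℕ → ℤ) h
    push_cast at h2
    rw [hetoNat] at h2
    rw [← h2]
    apply Finset.sum_congr rfl
    intro i _
    simp only [hw_def]
    split <;> ring
  -- the carry constant c
  have hdvd_e : M ∣ (A - B) - e := by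
    rw [he_def, Int.emod_def]
    ring_nf
    exact Dvd.intro _ (by ring)
  obtain ⟨k, hk⟩ := hdvd_e
  set c : ℤ := -k with hc_def
  have he_eq : e = A - B + M * c := by
    simp only [hc_def]
    linarith [hk]
  -- A - B ≠ M
  have hABne : A - B ≠ M := by
    intro hABM
    have hBz : B = 0 := by linarith
    have hAM : A = M := by linarith
    have hsum0 : ∑ i ∈ range T, (1 - m i) * 2 ^ i = 0 := by
      have hg := geom_int T
      have : ∑ i ∈ range T, (1 - m i) * 2 ^ i
          = (∑ i ∈ range T, (2:ℤ)^i) - ∑ i ∈ range T, m i * 2^i := by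
        rw [← Finset.sum_sub_distrib]
        apply Finset.sum_congr rfl
        intro i _
        ring
      rw [this, hg, ← hA_def, hAM, hM_def]
      ring
    have hall : ∀ i ∈ range T, (1 - m i) * 2 ^ i = 0 := by
      refine (Finset.sum_eq_zero_iff_of_nonneg ?_).mp hsum0
      intro i _
      rcases hm01 i with h | h <;> rw [h]
      · have : (0:ℤ) ≤ 2^i := by positivity
        linarith
      · simp
    have hm1 : ∀ i ∈ range T, m i = 1 := by
      intro i hi
      have h := hall i hi
      have h2 : (0:ℤ) < 2 ^ i := by positivity
      rcases mul_eq_zero.mp h with h3 | h3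
      · linarith
      · exfalso; linarith
    have hcontr : ∑ j ∈ range T, m j = (T : ℤ) := by
      rw [Finset.sum_congr rfl hm1, Finset.sum_const, Finset.card_range]
      simp
    rw [hbalZ] at hcontr
    have hp2 : (2:ℤ)^(n-1) < (T:ℤ) := by
      have h1 : 2^(n-1) < T := by
        have h2 : 2 ^ ((n-1)+1) = 2 * 2 ^ (n-1) := by rw [pow_succ]; ring
        have h2' : (n-1) + 1 = n := by omega
        rw [h2'] at h2
        have h5 : 2 ≤ 2^(n-1) := by
          calc 2 = 2^1 := by norm_num
            _ ≤ 2^(n-1) := Nat.pow_le_pow_right (by norm_num) (by omega)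
        omega
      exact_mod_cast h1
    linarith
  have hc01 : c = 0 ∨ c = 1 := by
    have hub : M * c < 2 * M := by
      have : M * c = e - (A - B) := by linarith [he_eq]
      linarith
    have hlb : -M < M * c := by
      have h1 : M * c = e - (A - B) := by linarith [he_eq]
      have h2 : A - B < M := lt_of_le_of_ne (by linarith) hABne
      linarith
    have hc2 : c < 2 := by
      by_contra hcon
      push_neg at hcon
      nlinarith
    have hcm1 : -1 < c := by
      by_contra hcon
      push_neg at hcon
      nlinarith
    omega
  -- partial sums
  set SA : ℕ → ℤ := fun j => ∑ i ∈ range j, m i * 2 ^ i with hSA_def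
  set SB : ℕ → ℤ := fun j => ∑ i ∈ range j, m (i + τ) * 2 ^ i with hSB_def
  set SE : ℕ → ℤ := fun j => ∑ i ∈ range j, w i * 2 ^ i with hSE_def
  set Nf : ℕ → ℤ := fun j => c + SE j + SB j - SA j with hNf_def
  have hNT : Nf T = c * 2 ^ T := by
    simp only [hNf_def, hSE_def, hSB_def, hSA_def]
    rw [hsumw, ← hA_def, ← hB_def, he_eq, hM_def]
    ring
  have hdvd : ∀ j, j ≤ T → (2:ℤ)^j ∣ Nf j := by
    intro j hj
    have hdecomp : ∀ J, ∑ i ∈ range J, (w i + m (i + τ) - m i) * 2 ^ i = SE J + SB J - SA J := by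
      intro J
      simp only [hSE_def, hSB_def, hSA_def]
      rw [← Finset.sum_add_distrib, ← Finset.sum_sub_distrib]
      apply Finset.sum_congr rfl
      intro i _
      ring
    have h1 : Nf T - Nf j = ∑ i ∈ Ico j T, (w i + m (i + τ) - m i) * 2 ^ i := by
      rw [Finset.sum_Ico_eq_sub _ hj, hdecomp, hdecomp]
      simp only [hNf_def]
      ring
    have h2 : (2:ℤ)^j ∣ Nf T - Nf j := by
      rw [h1]
      apply Finset.dvd_sum
      intro i hi
      have hji : j ≤ i := (Finset.mem_Ico.mp hi).1
      exact Dvd.dvd.mul_left (pow_dvd_pow 2 hji) _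
    have h3 : (2:ℤ)^j ∣ Nf T := by
      rw [hNT]
      exact Dvd.dvd.mul_left (pow_dvd_pow 2 hj) c
    have h4 : Nf j = Nf T - (Nf T - Nf j) := by ring
    rw [h4]
    exact dvd_sub h3 h2
  set b : ℕ → ℤ := fun j => Nf j / 2 ^ j with hb_def
  have hbN : ∀ j, j ≤ T → 2 ^ j * b j = Nf j := by
    intro j hj
    exact Int.mul_ediv_cancel' (hdvd j hj)
  have hb01 : ∀ j, j ≤ T → b j = 0 ∨ b j = 1 := by
    intro j hj
    have h := hbN j hj
    have hc0 : 0 ≤ c := by rcases hc01 with h' | h' <;> omega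
    have hc1 : c ≤ 1 := by rcases hc01 with h' | h' <;> omega
    have hE0 : 0 ≤ SE j := sum01_nonneg hw01 j
    have hE1 : SE j ≤ 2^j - 1 := sum01_le hw01 j
    have hSB0 : 0 ≤ SB j := sum01_nonneg (fun i => hm01 (i + τ)) j
    have hSB1 : SB j ≤ 2^j - 1 := sum01_le (fun i => hm01 (i + τ)) j
    have hSA0 : 0 ≤ SA j := sum01_nonneg hm01 j
    have hSA1 : SA j ≤ 2^j - 1 := sum01_le hm01 j
    have hlo : 1 - 2^j ≤ Nf j := by simp only [hNf_def]; linarith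
    have hhi : Nf j ≤ 2 * 2^j - 1 := by simp only [hNf_def]; linarith
    have hp : (0:ℤ) < 2^j := by positivity
    have hbu : b j < 2 := by nlinarith
    have hbl : -1 < b j := by nlinarith
    omega
  have hb0 : b 0 = c := by
    simp only [hb_def, hNf_def, hSE_def, hSB_def, hSA_def]
    simp
  have hbT : b T = c := by
    have h := hbN T le_rfl
    rw [hNT] at h
    have hp : (2:ℤ)^T ≠ 0 := by positivity
    have h2 : 2 ^ T * b T = 2 ^ T * c := by linarith
    exact mul_left_cancel₀ hp h2
  have hrec : ∀ j, j < T → 2 * b (j+1) = b j + w j + m (j + τ) - m j := by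
    intro j hj
    have h1 := hbN j (le_of_lt hj)
    have h2 := hbN (j+1) hj
    have h3 : Nf (j+1) - Nf j = (w j + m (j + τ) - m j) * 2 ^ j := by
      simp only [hNf_def, hSE_def, hSB_def, hSA_def, Finset.sum_range_succ]
      ring
    have hp : (2:ℤ)^j ≠ 0 := by positivity
    apply mul_left_cancel₀ hp
    have hps : (2:ℤ)^(j+1) = 2^j * 2 := by rw [pow_succ]
    rw [hps] at h2
    nlinarith [h1, h2, h3]
  -- shift-and-add structure
  obtain ⟨τ', hτ'T, hτ'⟩ := hsaa τ hτ1 hτ2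
  have hkey : ∀ j, m (j + τ') = m j + m (j + τ) - 2 * (m j * m (j + τ)) := by
    intro j
    have h1 := hτ' j
    have h3 : ∀ x y : ZMod 2, (((x + y).val : ℤ))
        = (x.val : ℤ) + (y.val : ℤ) - 2 * ((x.val : ℤ) * (y.val : ℤ)) := by decide
    have h4 : m (j + τ') = (((s j + s (j + τ)).val : ℤ)) := by
      simp only [hm_def]
      rw [h1]
    rw [h4, h3]
  -- correlation
  have hcorr : ∑ j ∈ range T, m (j + τ') * m (j + τ) = 2^(n-2) := by
    rcases lt_trichotomy τ' τ with hlt | heq | hgt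
    · have h := corr_lemma n T hn hT s hper hbal hsaa τ' τ hlt (by omega)
      exact h
    · exfalso
      have hs0 : ∀ j, s j = 0 := by
        intro j
        have h := hτ' j
        rw [heq] at h
        have h2 : s j + s (j + τ) = 0 + s (j + τ) := by rw [h, zero_add]
        exact add_right_cancel h2
      have : ∑ j ∈ range T, m j = 0 := by
        apply Finset.sum_eq_zero
        intro j _
        simp only [hm_def, hs0 j]
        simp
      rw [hbalZ] at this
      have hp : (0:ℤ) < 2^(n-1) := by positivity
      linarith
    · have h := corr_lemma n T hn hT s hper hbal hsaa τ τ' hgt (by omega)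
      rw [← h]
      apply Finset.sum_congr rfl
      intro j _
      ring
  -- telescoping
  have htel : ∑ j ∈ range T, (b (j+1) - b j) = 0 := by
    rw [Finset.sum_range_sub]
    rw [hbT, hb0]
    ring
  have hstep : ∀ j ∈ range T, b (j+1) - b j = m (j + τ') * (m (j + τ) - b j) := by
    intro j hj
    have hjT : j < T := Finset.mem_range.mp hj
    have h := hrec j hjT
    have hk := hkey j
    have hbj := hb01 j (le_of_lt hjT)
    have hbj1 := hb01 (j+1) hjT
    have hwj := hw01 j
    rcases hm01 (j + τ) with h2 | h2 <;> rcases hbj with h3 | h3 <;> rcases hm01 j with h4 | h4 <;>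
      simp only [h2, h3, h4, mul_zero, mul_one, zero_mul, one_mul, sub_zero, zero_sub,
        add_zero, zero_add, mul_neg, neg_zero] at h hk ⊢ <;> omega
  have hbsum : ∑ j ∈ range T, m (j + τ') * b j = 2^(n-2) := by
    have h1 : ∑ j ∈ range T, (b (j+1) - b j)
        = ∑ j ∈ range T, m (j + τ') * (m (j + τ) - b j) :=
      Finset.sum_congr rfl hstep
    rw [htel] at h1
    have h2 : ∑ j ∈ range T, m (j + τ') * (m (j + τ) - b j)
        = (∑ j ∈ range T, m (j + τ') * m (j + τ)) - ∑ j ∈ range T, m (j + τ') * b j := by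
      rw [← Finset.sum_sub_distrib]
      apply Finset.sum_congr rfl
      intro j _
      ring
    rw [h2, hcorr] at h1
    linarith
  -- pointwise inequalities
  have hlow : ∀ j ∈ range T, m (j + τ') * (1 - b j) ≤ w j := by
    intro j hj
    have hjT : j < T := Finset.mem_range.mp hj
    have h := hrec j hjT
    have hk := hkey j
    have hbj := hb01 j (le_of_lt hjT)
    have hbj1 := hb01 (j+1) hjT
    have hwj := hw01 j
    rcases hm01 (j + τ) with h2 | h2 <;> rcases hbj with h3 | h3 <;> rcases hm01 j with h4 | h4 <;>
      simp only [h2, h3, h4, mul_zero, mul_one, zero_mul, one_mul, sub_zero, zero_sub,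
        add_zero, zero_add, mul_neg, neg_zero] at h hk ⊢ <;> omega
  have hup : ∀ j ∈ range T, m (j + τ') * b j ≤ 1 - w j := by
    intro j hj
    have hjT : j < T := Finset.mem_range.mp hj
    have h := hrec j hjT
    have hk := hkey j
    have hbj := hb01 j (le_of_lt hjT)
    have hbj1 := hb01 (j+1) hjT
    have hwj := hw01 j
    rcases hm01 (j + τ) with h2 | h2 <;> rcases hbj with h3 | h3 <;> rcases hm01 j with h4 | h4 <;>
      simp only [h2, h3, h4, mul_zero, mul_one, zero_mul, one_mul, sub_zero, zero_sub,
        add_zero, zero_add, mul_neg, neg_zero] at h hk ⊢ <;> omega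
  -- the popcount
  have hP : (((range T).filter (fun k => e.toNat.testBit k = true)).card : ℤ)
      = ∑ j ∈ range T, w j := by
    rw [Finset.card_filter]
    push_cast
    apply Finset.sum_congr rfl
    intro j _
    simp only [hw_def]
  have hsl : ∑ j ∈ range T, m (j + τ') * (1 - b j)
      = (∑ j ∈ range T, m (j + τ')) - ∑ j ∈ range T, m (j + τ') * b j := by
    rw [← Finset.sum_sub_distrib]
    apply Finset.sum_congr rfl
    intro j _
    ring
  have hlower : (2:ℤ)^(n-2) ≤ ∑ j ∈ range T, w j := by
    have h1 : ∑ j ∈ range T, m (j + τ') * (1 - b j) ≤ ∑ j ∈ range T, w j :=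
      Finset.sum_le_sum hlow
    rw [hsl, hshift τ', hbsum] at h1
    have hp : (2:ℤ)^(n-1) = 2 * 2^(n-2) := by
      rw [show n - 1 = (n-2) + 1 from by omega, pow_succ]
      ring
    linarith
  have hupper : ∑ j ∈ range T, w j ≤ (T:ℤ) - 2^(n-2) := by
    have h1 : ∑ j ∈ range T, m (j + τ') * b j ≤ ∑ j ∈ range T, (1 - w j) :=
      Finset.sum_le_sum hup
    rw [hbsum] at h1
    have h2 : ∑ j ∈ range T, (1 - w j) = (T:ℤ) - ∑ j ∈ range T, w j := by
      rw [Finset.sum_sub_distrib, Finset.sum_const, Finset.card_range]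
      ring
    rw [h2] at h1
    linarith
  -- convert to the goal
  set P : ℕ := ((range T).filter (fun k => e.toNat.testBit k = true)).card with hP_def
  have hc1 : ((2^(n-2) : ℕ) : ℤ) = (2:ℤ)^(n-2) := by push_cast; ring
  have hTP : 2^(n-2) ≤ T := by
    have h2 : 2 ^ ((n-2)+2) = 4 * 2 ^ (n-2) := by rw [pow_add]; ring
    have h2' : (n-2) + 2 = n := by omega
    rw [h2'] at h2
    have h3 : 1 ≤ 2^(n-2) := Nat.one_le_two_pow
    omega
  have hl' : 2^(n-2) ≤ P := by
    have h1 : ((2^(n-2):ℕ):ℤ) ≤ (P:ℤ) := by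
      rw [hP, hc1]
      exact hlower
    exact_mod_cast h1
  have hu' : P + 2^(n-2) ≤ T := by
    have h1 : (P:ℤ) + ((2^(n-2):ℕ):ℤ) ≤ (T:ℤ) := by
      rw [hP, hc1]
      linarith
    exact_mod_cast h1
  exact ⟨hl', by omega⟩

/-- **Main theorem.** Let `T = 2^n - 1` and let `s : ℕ → ZMod 2` be a `T`-periodic
sequence which is balanced and has the shift-and-add property (e.g. a binary
`m`-sequence of period `2^n - 1`). For `1 ≤ τ < T`, with
`A = Σ_{i<T} m i · 2^i`, `B = Σ_{i<T} m (i+τ) · 2^i` (where `m i = (s i).val`)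
and `N₁` the number of `k < T` whose `k`-th binary digit of `|A - B|` is `1`,
the arithmetic autocorrelation satisfies `|A^A_s(τ)| = |T - 2 N₁| ≤ 2^(n-1) - 1`. -/
theorem arithmetic_autocorrelation_m_sequence (n : ℕ) (hn : 1 ≤ n)
    (T : ℕ) (hT : T = 2 ^ n - 1) (s : ℕ → ZMod 2)
    (hper : ∀ i, s (i + T) = s i)
    (hbal : ((Finset.range T).filter (fun i => s i = 1)).card = 2 ^ (n - 1))
    (hsaa : ∀ τ, 1 ≤ τ → τ < T → ∃ τ', τ' < T ∧ ∀ i, s i + s (i + τ) = s (i + τ')) :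
    ∀ τ, 1 ≤ τ → τ < T →
      |(T : ℤ) - 2 * ((Finset.range T).filter
          (fun k => ((∑ i ∈ Finset.range T, ((s i).val : ℤ) * 2 ^ i)
            - ∑ i ∈ Finset.range T, ((s (i + τ)).val : ℤ) * 2 ^ i).natAbs.testBit k
              = true)).card|
        ≤ 2 ^ (n - 1) - 1 := by
  intro τ hτ1 hτ2
  by_cases hn2 : 2 ≤ n
  swap
  · -- n = 1, so T = 1 and there is no such τ
    exfalso
    have hn1 : n = 1 := by omega
    rw [hn1] at hT
    norm_num at hT
    omega
  -- basic facts
  have hm01 : ∀ i, ((s i).val : ℤ) = 0 ∨ ((s i).val : ℤ) = 1 := by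
    intro i
    have h : (s i).val < 2 := ZMod.val_lt (s i)
    omega
  have hmper : ∀ i, ((s (i + T)).val : ℤ) = ((s i).val : ℤ) := fun i => by rw [hper i]
  have hT3 : 3 ≤ T := by
    have h4 : 4 ≤ 2 ^ n := by
      calc (4:ℕ) = 2 ^ 2 := by norm_num
        _ ≤ 2 ^ n := Nat.pow_le_pow_right (by norm_num) hn2
    omega
  have h2T : (2:ℤ) ≤ 2 ^ T := by
    calc (2:ℤ) = 2 ^ 1 := by norm_num
      _ ≤ 2 ^ T := pow_le_pow_right₀ (by norm_num) (by omega)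
  have hpow1 : 1 ≤ 2^(n-2) := Nat.one_le_two_pow
  -- the key bound for (s, τ)
  have hkb := key_bounds n T hn2 hT s hper hbal hsaa τ hτ1 hτ2
  -- hypotheses for the shifted sequence s' = fun i => s (i + τ)
  have hper' : ∀ i, s (i + T + τ) = s (i + τ) := by
    intro i
    rw [show i + T + τ = (i + τ) + T from by omega]
    exact hper (i + τ)
  have hbal' : ((Finset.range T).filter (fun i => s (i + τ) = 1)).card = 2 ^ (n - 1) := by
    have hb1 : ((((Finset.range T).filter (fun i => s (i + τ) = 1)).card : ℤ))
        = ∑ i ∈ Finset.range T, ((s (i + τ)).val : ℤ) := card_filter_one T (fun i => s (i + τ))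
    have hsh : ∑ j ∈ Finset.range T, ((s (j + τ)).val : ℤ)
        = ∑ j ∈ Finset.range T, ((s j).val : ℤ) :=
      sum_shift τ (fun i => ((s i).val : ℤ)) hmper
    have hb0 : ((((Finset.range T).filter (fun i => s i = 1)).card : ℤ))
        = ∑ i ∈ Finset.range T, ((s i).val : ℤ) := card_filter_one T s
    rw [hbal] at hb0
    have : ((((Finset.range T).filter (fun i => s (i + τ) = 1)).card : ℤ))
        = ((2 ^ (n-1) : ℕ) : ℤ) := by rw [hb1, hsh, ← hb0]
    exact_mod_cast this
  have hsaa' : ∀ σ, 1 ≤ σ → σ < T →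
      ∃ σ', σ' < T ∧ ∀ i, s (i + τ) + s (i + σ + τ) = s (i + σ' + τ) := by
    intro σ h1 h2
    obtain ⟨σ', hσ'T, hσ'⟩ := hsaa σ h1 h2
    refine ⟨σ', hσ'T, fun i => ?_⟩
    rw [show i + σ + τ = (i + τ) + σ from by omega,
        show i + σ' + τ = (i + τ) + σ' from by omega]
    exact hσ' (i + τ)
  have hkb2 : 2 ^ (n - 2) ≤ ((Finset.range T).filter (fun k =>
        (((∑ i ∈ Finset.range T, ((s (i + τ)).val : ℤ) * 2 ^ i)
          - ∑ i ∈ Finset.range T, ((s (i + (T - τ) + τ)).val : ℤ) * 2 ^ i) % (2 ^ T - 1)).toNat.testBit k = true)).card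
      ∧ ((Finset.range T).filter (fun k =>
        (((∑ i ∈ Finset.range T, ((s (i + τ)).val : ℤ) * 2 ^ i)
          - ∑ i ∈ Finset.range T, ((s (i + (T - τ) + τ)).val : ℤ) * 2 ^ i) % (2 ^ T - 1)).toNat.testBit k = true)).card ≤ T - 2 ^ (n - 2) :=
    key_bounds n T hn2 hT (fun i => s (i + τ)) hper' hbal' hsaa' (T - τ) (by omega) (by omega)
  have hswap : ∑ i ∈ Finset.range T, ((s (i + (T - τ) + τ)).val : ℤ) * 2 ^ i
      = ∑ i ∈ Finset.range T, ((s i).val : ℤ) * 2 ^ i :=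
    Finset.sum_congr rfl (fun i _ => by
      rw [show i + (T - τ) + τ = i + T from by omega, hper i])
  rw [hswap] at hkb2
  -- now fold notation
  set A : ℤ := ∑ i ∈ Finset.range T, ((s i).val : ℤ) * 2 ^ i with hA_def
  set B : ℤ := ∑ i ∈ Finset.range T, ((s (i + τ)).val : ℤ) * 2 ^ i with hB_def
  set M : ℤ := 2 ^ T - 1 with hM_def
  have hMpos : 0 < M := by rw [hM_def]; linarith
  have hA0 : 0 ≤ A := sum01_nonneg hm01 T
  have hA1 : A ≤ M := sum01_le hm01 T
  have hB0 : 0 ≤ B := sum01_nonneg (fun i => hm01 (i + τ)) T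
  have hB1 : B ≤ M := sum01_le (fun i => hm01 (i + τ)) T
  set e1 : ℤ := (A - B) % M with he1_def
  set e2 : ℤ := (B - A) % M with he2_def
  have he10 : 0 ≤ e1 := Int.emod_nonneg _ (ne_of_gt hMpos)
  have he1M : e1 < M := Int.emod_lt_of_pos _ hMpos
  have he20 : 0 ≤ e2 := Int.emod_nonneg _ (ne_of_gt hMpos)
  have he2M : e2 < M := Int.emod_lt_of_pos _ hMpos
  set P1 : ℕ := ((Finset.range T).filter (fun k => e1.toNat.testBit k = true)).card with hP1_def
  set P2 : ℕ := ((Finset.range T).filter (fun k => e2.toNat.testBit k = true)).card with hP2_def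
  have he1ne : e1 ≠ 0 := by
    intro h0
    have hz : P1 = 0 := by
      rw [hP1_def, h0]
      simp [Nat.zero_testBit]
    omega
  have he2ne : e2 ≠ 0 := by
    intro h0
    have hz : P2 = 0 := by
      rw [hP2_def, h0]
      simp [Nat.zero_testBit]
    omega
  have hd1 : (A - B) - e1 = M * ((A - B) / M) := by rw [he1_def, Int.emod_def]; ring
  have hd2 : (B - A) - e2 = M * ((B - A) / M) := by rw [he2_def, Int.emod_def]; ring
  -- power arithmetic
  have h2n : 2 ^ n = 4 * 2 ^ (n - 2) := by
    have h2 : 2 ^ ((n-2)+2) = 4 * 2 ^ (n-2) := by rw [pow_add]; ring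
    have h2' : (n-2) + 2 = n := by omega
    rw [h2'] at h2
    exact h2
  have h2n1 : 2 ^ (n - 1) = 2 * 2 ^ (n - 2) := by
    have h2 : 2 ^ ((n-2)+1) = 2 * 2 ^ (n-2) := by rw [pow_succ]; ring
    have h2' : (n-2) + 1 = n - 1 := by omega
    rw [h2'] at h2
    exact h2
  have hcast : ((2 ^ (n-1) : ℕ) : ℤ) = (2:ℤ) ^ (n - 1) := by push_cast; ring
  rw [← hcast, abs_le]
  by_cases hsign : 0 ≤ A - B
  · -- A ≥ B : |A - B| has the bits of e1
    have hk01 : (A - B) / M = 0 ∨ (A - B) / M = 1 := by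
      have hub : M * ((A - B) / M) ≤ M := by rw [← hd1]; linarith
      have hlb : -M < M * ((A - B) / M) := by rw [← hd1]; linarith
      have hu2 : (A - B) / M < 2 := by
        by_contra hcon
        push_neg at hcon
        nlinarith
      have hl2 : -1 < (A - B) / M := by
        by_contra hcon
        push_neg at hcon
        nlinarith
      omega
    have hABe : A - B = e1 := by
      rcases hk01 with h | h <;> rw [h] at hd1
      · linarith
      · exfalso
        have : e1 = A - B - M := by linarith
        have : e1 ≤ 0 := by linarith
        omega
    have hQe : (A - B).natAbs = e1.toNat := by omega
    rw [hQe, ← hP1_def]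
    constructor <;> omega
  · -- A < B : |A - B| has the bits of e2
    push_neg at hsign
    have hk01 : (B - A) / M = 0 ∨ (B - A) / M = 1 := by
      have hub : M * ((B - A) / M) ≤ M := by rw [← hd2]; linarith
      have hlb : -M < M * ((B - A) / M) := by rw [← hd2]; linarith
      have hu2 : (B - A) / M < 2 := by
        by_contra hcon
        push_neg at hcon
        nlinarith
      have hl2 : -1 < (B - A) / M := by
        by_contra hcon
        push_neg at hcon
        nlinarith
      omega
    have hABe : B - A = e2 := by
      rcases hk01 with h | h <;> rw [h] at hd2
      · linarith
      · exfalso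
        have : e2 = B - A - M := by linarith
        have : e2 ≤ 0 := by linarith
        omega
    have hQe : (A - B).natAbs = e2.toNat := by omega
    rw [hQe, ← hP2_def]
    constructor <;> omega
end

section
/- Let n ≥ 1 and T = 2^n − 1, and let s : ℕ → ZMod 2 be a T-periodic binary sequence that is balanced and whose classical autocorrelation is ideal, i.e., Σ_{i<T} (−1)^{s(i)+s(i+τ)} = −1 for every 1 ≤ τ < T. Then for every shift τ with 1 ≤ τ < T, the arithmetic autocorrelation satisfies |A^A_s(τ)| = |T − 2·N₁| ≤ 2^{n−1} − 1, where N₁ is the number of indices k < T such that the k-th binary digit of |A − B| equals 1, with A = Σ_{i<T} m(i)·2^i and B = Σ_{i<T} m(i+τ)·2^i and m(i) ∈ {0,1} ⊂ ℤ the integer lift of s(i). -/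
open Finset

lemma key_bound (T : ℕ) (e : ℕ → ℤ) (he : ∀ j, e j = 1 ∨ e j = 0 ∨ e j = -1)
    (hD : 0 ≤ ∑ j ∈ Finset.range T, e j * 2 ^ j) :
    (((Finset.range T).filter (fun j => e j = 1)).card : ℤ)
      ≤ (((Finset.range T).filter
          (fun k => (∑ j ∈ Finset.range T, e j * 2 ^ j).natAbs.testBit k = true)).card : ℤ)
    ∧ (((Finset.range T).filter
          (fun k => (∑ j ∈ Finset.range T, e j * 2 ^ j).natAbs.testBit k = true)).card : ℤ)
      + ((Finset.range T).filter (fun j => e j = -1)).card ≤ T := by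
  set P : ℕ → ℤ := fun k => ∑ j ∈ Finset.range k, e j * 2 ^ j with hPdef
  have habs : ∀ k, |P k| < 2 ^ k := by
    intro k
    induction k with
    | zero => simp [P]
    | succ k ih =>
      have hs : P (k + 1) = P k + e k * 2 ^ k := Finset.sum_range_succ _ _
      have hek : |e k * 2 ^ k| ≤ 2 ^ k := by
        rcases he k with h | h | h <;> rw [h] <;> simp
      calc |P (k + 1)| ≤ |P k| + |e k * 2 ^ k| := by rw [hs]; exact abs_add_le _ _
        _ < 2 ^ k + 2 ^ k := by linarith
        _ = 2 ^ (k + 1) := by ring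
  -- borrow indicator
  set c : ℕ → ℤ := fun k => if P k < 0 then 1 else 0 with hcdef
  set N : ℕ := (P T).natAbs with hNdef
  have hNP : (N : ℤ) = P T := Int.natAbs_of_nonneg hD
  -- the k-th step mod identity
  have hmod : ∀ k, k ≤ T → (N : ℤ) % 2 ^ k = P k + c k * 2 ^ k := by
    intro k hk
    have h1 : (N : ℤ) % 2 ^ k = P k % 2 ^ k := by
      rw [hNP]
      have hdvd : (2 ^ k : ℤ) ∣ P T - P k := by
        have hsplit : P k + ∑ j ∈ Finset.Ico k T, e j * 2 ^ j = P T :=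
          Finset.sum_range_add_sum_Ico _ hk
        have : P T - P k = ∑ j ∈ Finset.Ico k T, e j * 2 ^ j := by linarith
        rw [this]
        refine Finset.dvd_sum ?_
        intro j hj
        exact Dvd.dvd.mul_left (pow_dvd_pow 2 (Finset.mem_Ico.mp hj).1) _
      exact Int.ModEq.symm (Int.modEq_iff_dvd.mpr hdvd)
    rw [h1]
    have hb := habs k
    rw [abs_lt] at hb
    by_cases hneg : P k < 0
    · simp only [hcdef, if_pos hneg]
      have : P k % 2 ^ k = (P k + 2 ^ k * 1) % 2 ^ k := (Int.add_mul_emod_self_left ..).symm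
      rw [this, mul_one, Int.emod_eq_of_lt (by linarith) (by linarith)]
      ring
    · simp only [hcdef, if_neg hneg]
      push_neg at hneg
      rw [Int.emod_eq_of_lt hneg hb.2]
      ring
  -- digit identity
  have hdig : ∀ k, k < T → ((N / 2 ^ k % 2 : ℕ) : ℤ) = e k + 2 * c (k + 1) - c k := by
    intro k hk
    have h1 : (N : ℤ) % 2 ^ (k + 1) = (N : ℤ) % 2 ^ k + 2 ^ k * ((N / 2 ^ k % 2 : ℕ) : ℤ) := by
      have : N % (2 ^ (k + 1)) = N % 2 ^ k + 2 ^ k * (N / 2 ^ k % 2) := by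
        rw [pow_succ]; exact Nat.mod_mul
      exact_mod_cast this
    have h2 := hmod k (le_of_lt hk)
    have h3 := hmod (k + 1) hk
    have hs : P (k + 1) = P k + e k * 2 ^ k := Finset.sum_range_succ _ _
    have hne : (2 : ℤ) ^ k ≠ 0 := by positivity
    have : 2 ^ k * ((N / 2 ^ k % 2 : ℕ) : ℤ) = 2 ^ k * (e k + 2 * c (k + 1) - c k) := by
      have hp : (2 : ℤ) ^ (k + 1) = 2 ^ k * 2 := by ring
      linear_combination h3 - h1 - h2 + hs + c (k + 1) * hp
    exact mul_left_cancel₀ hne this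
  -- N₁ as a sum
  have hcard : ∀ (f : ℕ → Prop) (_ : DecidablePred f),
      (((Finset.range T).filter f).card : ℤ) = ∑ k ∈ Finset.range T, if f k then (1 : ℤ) else 0 := by
    intro f hf
    rw [Finset.card_filter]
    push_cast
    rfl
  have htb : ∀ k, (if N.testBit k = true then (1 : ℤ) else 0) = ((N / 2 ^ k % 2 : ℕ) : ℤ) := by
    intro k
    rw [Nat.testBit_eq_decide_div_mod_eq]
    rcases Nat.mod_two_eq_zero_or_one (N / 2 ^ k) with h | h <;> simp [h]
  have hN1 : (((Finset.range T).filter (fun k => N.testBit k = true)).card : ℤ)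
      = ∑ k ∈ Finset.range T, (e k + 2 * c (k + 1) - c k) := by
    rw [hcard _ _]
    refine Finset.sum_congr rfl ?_
    intro k hk
    rw [htb k, hdig k (Finset.mem_range.mp hk)]
  have hc0 : c 0 = 0 := by simp [hcdef, P]
  have hcT : c T = 0 := by
    simp only [hcdef]
    rw [if_neg]
    exact not_lt.mpr hD
  have hshift : ∑ k ∈ Finset.range T, c (k + 1) = ∑ k ∈ Finset.range T, c k := by
    have h1 : ∑ k ∈ Finset.range (T + 1), c k
        = (∑ k ∈ Finset.range T, c (k + 1)) + c 0 := Finset.sum_range_succ' c T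
    have h2 : ∑ k ∈ Finset.range (T + 1), c k
        = (∑ k ∈ Finset.range T, c k) + c T := Finset.sum_range_succ c T
    rw [hc0] at h1; rw [hcT] at h2
    linarith
  -- sum of e equals p - q
  have hsume : ∑ k ∈ Finset.range T, e k
      = (((Finset.range T).filter (fun j => e j = 1)).card : ℤ)
        - (((Finset.range T).filter (fun j => e j = -1)).card : ℤ) := by
    rw [hcard _ _, hcard _ _, ← Finset.sum_sub_distrib]
    refine Finset.sum_congr rfl ?_
    intro k _
    rcases he k with h | h | h <;> rw [h] <;> norm_num
  -- X = number of negative partial sums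
  have hX : ∑ k ∈ Finset.range T, c (k + 1)
      = (((Finset.range T).filter (fun k => P (k + 1) < 0)).card : ℤ) := by
    rw [hcard _ _]
  set X : ℤ := ∑ k ∈ Finset.range T, c (k + 1) with hXdef
  have hN1' : (((Finset.range T).filter (fun k => N.testBit k = true)).card : ℤ)
      = (((Finset.range T).filter (fun j => e j = 1)).card : ℤ)
        - (((Finset.range T).filter (fun j => e j = -1)).card : ℤ) + X := by
    rw [hN1]
    have hexp : ∑ k ∈ Finset.range T, (e k + 2 * c (k + 1) - c k)
        = (∑ k ∈ Finset.range T, e k) + 2 * (∑ k ∈ Finset.range T, c (k + 1))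
          - ∑ k ∈ Finset.range T, c k := by
      rw [Finset.sum_sub_distrib, Finset.sum_add_distrib, Finset.mul_sum]
    rw [hexp, hsume]
    linarith [hshift]
  -- subset bounds
  have hcompl : ∀ (f : ℕ → Prop) (_ : DecidablePred f),
      (((Finset.range T).filter f).card : ℤ)
        + (((Finset.range T).filter (fun k => ¬ f k)).card : ℤ) = T := by
    intro f hf
    have := Finset.card_filter_add_card_filter_not (s := Finset.range T) (p := f)
    rw [Finset.card_range] at this
    exact_mod_cast this
  have hub : (((Finset.range T).filter (fun k => P (k + 1) < 0)).card : ℤ)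
      ≤ (((Finset.range T).filter (fun k => ¬ e k = 1)).card : ℤ) := by
    have hsub : (Finset.range T).filter (fun k => P (k + 1) < 0)
        ⊆ (Finset.range T).filter (fun k => ¬ e k = 1) := by
      intro k hk
      rw [Finset.mem_filter] at hk ⊢
      refine ⟨hk.1, ?_⟩
      intro h1
      have hs : P (k + 1) = P k + e k * 2 ^ k := Finset.sum_range_succ _ _
      have hb := (abs_lt.mp (habs k)).1
      rw [hs, h1] at hk
      linarith [hk.2]
    exact_mod_cast Finset.card_le_card hsub
  have hlb : (((Finset.range T).filter (fun k => ¬ P (k + 1) < 0)).card : ℤ)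
      ≤ (((Finset.range T).filter (fun k => ¬ e k = -1)).card : ℤ) := by
    have hsub : (Finset.range T).filter (fun k => ¬ P (k + 1) < 0)
        ⊆ (Finset.range T).filter (fun k => ¬ e k = -1) := by
      intro k hk
      rw [Finset.mem_filter] at hk ⊢
      refine ⟨hk.1, ?_⟩
      intro h1
      have hs : P (k + 1) = P k + e k * 2 ^ k := Finset.sum_range_succ _ _
      have hb := (abs_lt.mp (habs k)).2
      rw [hs, h1] at hk
      have : P k + -1 * 2 ^ k < 0 := by linarith
      exact hk.2 this
    exact_mod_cast Finset.card_le_card hsub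
  have e1 := hcompl (fun k => e k = 1) inferInstance
  have e2 := hcompl (fun k => e k = -1) inferInstance
  have e3 := hcompl (fun k => P (k + 1) < 0) inferInstance
  beta_reduce at e1 e2 e3
  constructor
  · rw [hN1']
    linarith [hX, hub, hlb, e1, e2, e3]
  · rw [hN1']
    linarith [hX, hub, hlb, e1, e2, e3]

lemma zmod2_E_cases : ∀ a b : ZMod 2,
    ((a.val : ℤ) - b.val = 1 ∨ (a.val : ℤ) - b.val = 0 ∨ (a.val : ℤ) - b.val = -1) := by
  decide

lemma zmod2_id_case : ∀ a b : ZMod 2,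
    ((-1 : ℤ)) ^ (a + b).val
      = 1 - 2 * ((if (a.val : ℤ) - b.val = 1 then (1 : ℤ) else 0)
        + (if (a.val : ℤ) - b.val = -1 then (1 : ℤ) else 0)) := by
  decide


/-- Let `T = 2^n - 1` and let `s : ℕ → ZMod 2` be a `T`-periodic sequence which is
balanced and has ideal classical autocorrelation, i.e.
`Σ_{i<T} (-1)^(s i + s (i+τ)) = -1` for all `1 ≤ τ < T`. For `1 ≤ τ < T`, with
`A = Σ_{i<T} m i · 2^i`, `B = Σ_{i<T} m (i+τ) · 2^i` (where `m i = (s i).val`)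
and `N₁` the number of `k < T` whose `k`-th binary digit of `|A - B|` is `1`,
the arithmetic autocorrelation satisfies `|A^A_s(τ)| = |T - 2 N₁| ≤ 2^(n-1) - 1`. -/
theorem arithmetic_autocorrelation_of_ideal_autocorrelation (n : ℕ) (hn : 1 ≤ n)
    (T : ℕ) (hT : T = 2 ^ n - 1) (s : ℕ → ZMod 2)
    (hper : ∀ i, s (i + T) = s i)
    (hbal : ((Finset.range T).filter (fun i => s i = 1)).card = 2 ^ (n - 1))
    (hideal : ∀ τ, 1 ≤ τ → τ < T →
      ∑ i ∈ Finset.range T, (-1 : ℤ) ^ (s i + s (i + τ)).val = -1) :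
    ∀ τ, 1 ≤ τ → τ < T →
      |(T : ℤ) - 2 * ((Finset.range T).filter
          (fun k => ((∑ i ∈ Finset.range T, ((s i).val : ℤ) * 2 ^ i)
            - ∑ i ∈ Finset.range T, ((s (i + τ)).val : ℤ) * 2 ^ i).natAbs.testBit k
              = true)).card|
        ≤ 2 ^ (n - 1) - 1 := by
  
  intro τ hτ1 hτ2
  have hcases : ∀ a : ZMod 2, a = 0 ∨ a = 1 := by decide
  set E : ℕ → ℤ := fun j => ((s j).val : ℤ) - ((s (j + τ)).val : ℤ) with hE
  have hDeq : (∑ i ∈ Finset.range T, ((s i).val : ℤ) * 2 ^ i)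
      - ∑ i ∈ Finset.range T, ((s (i + τ)).val : ℤ) * 2 ^ i
      = ∑ j ∈ Finset.range T, E j * 2 ^ j := by
    rw [← Finset.sum_sub_distrib]
    exact Finset.sum_congr rfl fun j _ => by rw [hE]; ring
  have he : ∀ j, E j = 1 ∨ E j = 0 ∨ E j = -1 := fun j => zmod2_E_cases (s j) (s (j + τ))
  -- cast of T
  have hTZ : (T : ℤ) = 2 ^ n - 1 := by
    have h1 : (1 : ℕ) ≤ 2 ^ n := Nat.one_le_two_pow
    rw [hT]
    push_cast [h1]
    ring
  have hn1 : n - 1 + 1 = n := by omega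
  have hpow1 : (2 : ℤ) ^ n = 2 ^ (n - 1) * 2 := by rw [← pow_succ, hn1]
  -- card-as-sum helper
  have hcard : ∀ (f : ℕ → Prop) (_ : DecidablePred f),
      (((Finset.range T).filter f).card : ℤ)
        = ∑ k ∈ Finset.range T, if f k then (1 : ℤ) else 0 := by
    intro f hf
    rw [Finset.card_filter]
    push_cast
    rfl
  set p := ((Finset.range T).filter (fun j => E j = 1)).card with hp
  set q := ((Finset.range T).filter (fun j => E j = -1)).card with hq
  -- p - q = 0 (shift-invariance of the sum of values)
  have hmper : ∀ i, ((s (i + T)).val : ℤ) = ((s i).val : ℤ) := fun i => by rw [hper i]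
  have hshift1 : ∀ g : ℕ → ℤ, (∀ j, g (j + T) = g j) →
      ∑ j ∈ Finset.range T, g (j + 1) = ∑ j ∈ Finset.range T, g j := by
    intro g hg
    have h1 := Finset.sum_range_succ' g T
    have h2 := Finset.sum_range_succ g T
    have h3 : g T = g 0 := by have := hg 0; rwa [zero_add] at this
    linarith
  have hsumshift : ∀ σ, ∑ i ∈ Finset.range T, ((s (i + σ)).val : ℤ)
      = ∑ i ∈ Finset.range T, ((s i).val : ℤ) := by
    intro σ
    induction σ with
    | zero => simp
    | succ σ ih =>
      have hgper : ∀ j : ℕ, ((s ((j + T) + σ)).val : ℤ) = ((s (j + σ)).val : ℤ) := by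
        intro j
        rw [show (j + T) + σ = (j + σ) + T by omega, hper]
      have hstep := hshift1 (fun j => ((s (j + σ)).val : ℤ)) hgper
      calc ∑ i ∈ Finset.range T, ((s (i + (σ + 1))).val : ℤ)
          = ∑ i ∈ Finset.range T, ((s ((i + 1) + σ)).val : ℤ) :=
            Finset.sum_congr rfl fun i _ => by rw [show i + (σ + 1) = (i + 1) + σ by omega]
        _ = ∑ i ∈ Finset.range T, ((s (i + σ)).val : ℤ) := hstep
        _ = _ := ih
  have hsumE : ∑ j ∈ Finset.range T, E j = 0 := by
    simp only [hE]
    rw [Finset.sum_sub_distrib, hsumshift τ]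
    ring
  have hpq0 : (p : ℤ) - q = 0 := by
    have hpt : ∑ k ∈ Finset.range T,
        ((if E k = 1 then (1 : ℤ) else 0) - if E k = -1 then (1 : ℤ) else 0)
        = ∑ k ∈ Finset.range T, E k := by
      refine Finset.sum_congr rfl fun k _ => ?_
      rcases he k with h | h | h <;> rw [h] <;> norm_num
    rw [hp, hq, hcard _ inferInstance, hcard _ inferInstance, ← Finset.sum_sub_distrib,
      hpt, hsumE]
  -- ideal autocorrelation gives p + q
  have hid := hideal τ hτ1 hτ2
  have hidterm : ∀ i, ((-1 : ℤ)) ^ (s i + s (i + τ)).val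
      = 1 - 2 * ((if E i = 1 then (1 : ℤ) else 0) + (if E i = -1 then (1 : ℤ) else 0)) := by
    intro i
    exact zmod2_id_case (s i) (s (i + τ))
  have hsumid : (T : ℤ) - 2 * ((p : ℤ) + q) = -1 := by
    rw [Finset.sum_congr rfl (fun i _ => hidterm i)] at hid
    rw [Finset.sum_sub_distrib, Finset.sum_const, Finset.card_range, ← Finset.mul_sum,
      Finset.sum_add_distrib] at hid
    rw [hp, hq, hcard _ inferInstance, hcard _ inferInstance]
    simpa using hid
  -- apply the key bound
  simp only [hDeq]
  rcases le_or_gt 0 (∑ j ∈ Finset.range T, E j * 2 ^ j) with hD | hD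
  · obtain ⟨h1, h2⟩ := key_bound T E he hD
    rw [← hp] at h1
    rw [← hq] at h2
    rw [abs_le]
    constructor <;> linarith [h1, h2]
  · set E' : ℕ → ℤ := fun j => -E j with hE'
    have he' : ∀ j, E' j = 1 ∨ E' j = 0 ∨ E' j = -1 := by
      intro j; rcases he j with h | h | h <;> simp [hE', h]
    have hsumneg : ∑ j ∈ Finset.range T, E' j * 2 ^ j
        = -(∑ j ∈ Finset.range T, E j * 2 ^ j) := by
      rw [← Finset.sum_neg_distrib]
      exact Finset.sum_congr rfl fun j _ => by rw [hE']; ring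
    obtain ⟨h1, h2⟩ := key_bound T E' he' (by rw [hsumneg]; linarith)
    rw [hsumneg, Int.natAbs_neg] at h1 h2
    have hf1 : (Finset.range T).filter (fun j => E' j = 1)
        = (Finset.range T).filter (fun j => E j = -1) := by
      apply Finset.filter_congr
      intro j _
      simp only [hE']
      omega
    have hf2 : (Finset.range T).filter (fun j => E' j = -1)
        = (Finset.range T).filter (fun j => E j = 1) := by
      apply Finset.filter_congr
      intro j _
      simp only [hE']
      omega
    rw [hf1, ← hq] at h1
    rw [hf2, ← hp] at h2
    rw [abs_le]
    constructor <;> linarith [h1, h2]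
end

section
/- Let T ≥ 1 and let s : ℕ → ZMod 2 be any T-periodic binary sequence. Then for every shift τ with 0 ≤ τ < T, the arithmetic autocorrelation and the classical autocorrelation satisfy |A^A_s(τ)| = |T − 2·N₁| ≤ (T + A_s(τ))/2, where A_s(τ) = Σ_{i<T} (−1)^{s(i)+s(i+τ)}, and N₁ is the number of indices k < T such that the k-th binary digit of |A − B| equals 1, with A = Σ_{i<T} m(i)·2^i and B = Σ_{i<T} m(i+τ)·2^i and m(i) ∈ {0,1} ⊂ ℤ the integer lift of s(i). Equivalently, |T − 2N₁| ≤ T − D, where D is the number of indices i < T with s(i) ≠ s(i+τ). -/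
open Finset

private lemma lt_two_pow_sum (a : ℕ → ℕ) (ha : ∀ i, a i ≤ 1) :
    ∀ T, ∑ j ∈ range T, a j * 2 ^ j < 2 ^ T := by
  intro T
  induction T with
  | zero => simp
  | succ T ih =>
    rw [Finset.sum_range_succ, pow_succ]
    have h1 : a T * 2 ^ T ≤ 2 ^ T := by
      have := ha T
      calc a T * 2 ^ T ≤ 1 * 2 ^ T := Nat.mul_le_mul_right _ this
        _ = 2 ^ T := one_mul _
    omega

private lemma sumdiv : ∀ T n, n < 2 ^ T →
    ((range T).filter (fun k => n.testBit k)).card + ∑ k ∈ range T, n / 2 ^ k = 2 * n := by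
  intro T
  induction T with
  | zero => intro n hn; interval_cases n; simp
  | succ T ih =>
    intro n hn
    have h2 : n / 2 < 2 ^ T := by
      rw [pow_succ] at hn; omega
    have hih := ih (n / 2) h2
    rw [Finset.card_filter] at hih ⊢
    rw [Finset.sum_range_succ' (fun k => if n.testBit k then 1 else 0) T]
    rw [Finset.sum_range_succ' (fun k => n / 2 ^ k) T]
    have e1 : ∀ k, n.testBit (k + 1) = (n / 2).testBit k := fun k => Nat.testBit_succ n k
    have e2 : ∀ k, n / 2 ^ (k + 1) = (n / 2) / 2 ^ k := by
      intro k
      rw [Nat.div_div_eq_div_mul, pow_succ']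
    simp only [e1, e2, pow_zero, Nat.div_one, Nat.testBit_zero]
    have e3 : (if (n % 2 = 1 : Bool) = true then 1 else 0) = n % 2 := by
      rcases Nat.mod_two_eq_zero_or_one n with h | h <;> simp [h]
    omega

private lemma modpow (a : ℕ → ℕ) (ha : ∀ i, a i ≤ 1) (T k : ℕ) (hk : k ≤ T) :
    (∑ j ∈ range T, a j * 2 ^ j) % 2 ^ k = ∑ j ∈ range k, a j * 2 ^ j := by
  rw [← Finset.sum_range_add_sum_Ico _ hk]
  have hdvd : 2 ^ k ∣ ∑ j ∈ Ico k T, a j * 2 ^ j :=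
    Finset.dvd_sum fun j hj => Dvd.dvd.mul_left (pow_dvd_pow 2 (mem_Ico.mp hj).1) _
  obtain ⟨M, hM⟩ := hdvd
  rw [hM, Nat.add_mul_mod_self_left, Nat.mod_eq_of_lt (lt_two_pow_sum a ha k)]

private lemma testbit_sum (a : ℕ → ℕ) (ha : ∀ i, a i ≤ 1) (T i : ℕ) (hi : i < T) :
    (∑ j ∈ range T, a j * 2 ^ j).testBit i = decide (a i = 1) := by
  rw [← Finset.sum_range_add_sum_Ico _ (show i + 1 ≤ T by omega), Finset.sum_range_succ]
  obtain ⟨M, hM⟩ : 2 ^ (i + 1) ∣ ∑ j ∈ Ico (i + 1) T, a j * 2 ^ j :=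
    Finset.dvd_sum fun j hj => Dvd.dvd.mul_left (pow_dvd_pow 2 (mem_Ico.mp hj).1) _
  rw [hM]
  have hL : ∑ j ∈ range i, a j * 2 ^ j < 2 ^ i := lt_two_pow_sum a ha i
  have hdiv : (∑ j ∈ range i, a j * 2 ^ j + a i * 2 ^ i + 2 ^ (i + 1) * M) / 2 ^ i % 2 = a i := by
    have hre : ∑ j ∈ range i, a j * 2 ^ j + a i * 2 ^ i + 2 ^ (i + 1) * M
        = ∑ j ∈ range i, a j * 2 ^ j + 2 ^ i * (a i + 2 * M) := by
      rw [pow_succ]; ring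
    rw [hre, Nat.add_mul_div_left _ _ (pow_pos two_pos i), Nat.div_eq_of_lt hL]
    have := ha i
    omega
  rw [Nat.testBit_eq_decide_div_mod_eq, hdiv]

private lemma weightcard (a : ℕ → ℕ) (ha : ∀ i, a i ≤ 1) (T : ℕ) :
    ((range T).filter (fun k => (∑ j ∈ range T, a j * 2 ^ j).testBit k)).card
      = ∑ i ∈ range T, a i := by
  rw [Finset.card_filter]
  refine Finset.sum_congr rfl fun k hk => ?_
  rw [testbit_sum a ha T k (mem_range.mp hk)]
  rcases Nat.le_one_iff_eq_zero_or_eq_one.mp (ha k) with h | h <;> simp [h]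

private lemma key (T : ℕ) (hT : 1 ≤ T) (a b : ℕ → ℕ) (ha : ∀ i, a i ≤ 1) (hb : ∀ i, b i ≤ 1)
    (hw : ∑ i ∈ range T, a i = ∑ i ∈ range T, b i)
    (hxy : ∑ i ∈ range T, b i * 2 ^ i ≤ ∑ i ∈ range T, a i * 2 ^ i) :
    ((range T).filter (fun i => a i ≠ b i)).card ≤
        2 * ((range T).filter (fun k =>
          ((∑ i ∈ range T, a i * 2 ^ i) - ∑ i ∈ range T, b i * 2 ^ i).testBit k)).card ∧
      2 * ((range T).filter (fun k =>
          ((∑ i ∈ range T, a i * 2 ^ i) - ∑ i ∈ range T, b i * 2 ^ i).testBit k)).card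
        + ((range T).filter (fun i => a i ≠ b i)).card ≤ 2 * T := by
  classical
  set x := ∑ i ∈ range T, a i * 2 ^ i with hxdef
  set y := ∑ i ∈ range T, b i * 2 ^ i with hydef
  set C := x - y with hCdef
  have hxlt : x < 2 ^ T := lt_two_pow_sum a ha T
  have hylt : y < 2 ^ T := lt_two_pow_sum b hb T
  have hClt : C < 2 ^ T := lt_of_le_of_lt (Nat.sub_le x y) hxlt
  have hyC : y + C = x := by omega
  set N₁ := ((range T).filter (fun k => C.testBit k)).card with hN
  set E := ((range T).filter (fun k => 2 ^ k ≤ y % 2 ^ k + C % 2 ^ k)).card with hE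
  -- N₁ = E
  have hsplit : ∑ k ∈ range T, x / 2 ^ k
      = (∑ k ∈ range T, y / 2 ^ k) + (∑ k ∈ range T, C / 2 ^ k) + E := by
    rw [hE, Finset.card_filter, ← Finset.sum_add_distrib, ← Finset.sum_add_distrib]
    refine Finset.sum_congr rfl fun k hk => ?_
    rw [← hyC, Nat.add_div (pow_pos two_pos k)]
  have e1 := sumdiv T x hxlt
  have e2 := sumdiv T y hylt
  have e3 := sumdiv T C hClt
  have w1 := weightcard a ha T
  have w2 := weightcard b hb T
  rw [← hxdef] at w1
  rw [← hydef] at w2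
  have hNE : N₁ = E := by omega
  set P := (range T).filter (fun i => a i = 1 ∧ b i = 0) with hP
  set Q := (range T).filter (fun i => a i = 0 ∧ b i = 1) with hQ
  -- lower bound: Q.card ≤ E
  have hQE : Q.card ≤ E := by
    rw [hE]
    apply Finset.card_le_card_of_injOn (fun i => i + 1)
    · intro i hi
      rw [hQ, Finset.mem_coe, mem_filter, mem_range] at hi
      obtain ⟨hiT, hai, hbi⟩ := hi
      have hiT' : i + 1 < T := by
        by_contra h
        have hieq : T = i + 1 := by omega
        have hy2 : 2 ^ i ≤ y := by
          have h1 : b i * 2 ^ i ≤ y :=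
            Finset.single_le_sum (f := fun j => b j * 2 ^ j)
              (fun j _ => Nat.zero_le _) (mem_range.mpr hiT)
          rw [hbi] at h1; omega
        have hx2 : x < 2 ^ i := by
          rw [hxdef, hieq, Finset.sum_range_succ, hai]
          simpa using lt_two_pow_sum a ha i
        omega
      rw [Finset.mem_coe, mem_filter, mem_range]
      refine ⟨hiT', ?_⟩
      have hym : 2 ^ i ≤ y % 2 ^ (i + 1) := by
        rw [hydef, modpow b hb T (i + 1) (by omega), Finset.sum_range_succ, hbi]
        omega
      have hxm : x % 2 ^ (i + 1) < 2 ^ i := by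
        rw [hxdef, modpow a ha T (i + 1) (by omega), Finset.sum_range_succ, hai]
        simpa using lt_two_pow_sum a ha i
      by_contra hcon
      push_neg at hcon
      have hCm : C % 2 ^ (i + 1) < 2 ^ (i + 1) := Nat.mod_lt _ (pow_pos two_pos _)
      have hmod : x % 2 ^ (i + 1) = y % 2 ^ (i + 1) + C % 2 ^ (i + 1) := by
        conv_lhs => rw [← hyC]
        rw [Nat.add_mod, Nat.mod_eq_of_lt (by omega)]
      omega
    · intro i _ j _ h
      exact Nat.succ_injective h
  -- upper bound: E + P.card ≤ T
  have hPE : E + P.card ≤ T := by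
    set F := (range T).filter (fun k => 2 ^ k ≤ y % 2 ^ k + C % 2 ^ k) with hF
    set S := insert 0 ((P.filter (fun i => i + 1 < T)).image (· + 1)) with hS
    have hSsub : S ⊆ range T := by
      intro k hk
      rw [hS, mem_insert] at hk
      rcases hk with rfl | hk
      · exact mem_range.mpr (by omega)
      · obtain ⟨i, hi, rfl⟩ := Finset.mem_image.mp hk
        exact mem_range.mpr (mem_filter.mp hi).2
    have hdisj : Disjoint S F := by
      rw [Finset.disjoint_left]
      intro k hk hk'
      have hcond := (mem_filter.mp hk').2
      rw [hS, mem_insert] at hk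
      rcases hk with rfl | hk
      · omega
      · obtain ⟨i, hi, rfl⟩ := Finset.mem_image.mp hk
        obtain ⟨hiP, hi1⟩ := mem_filter.mp hi
        rw [hP, mem_filter, mem_range] at hiP
        obtain ⟨hiT, hai, hbi⟩ := hiP
        have hxm : 2 ^ i ≤ x % 2 ^ (i + 1) := by
          rw [hxdef, modpow a ha T (i + 1) (by omega), Finset.sum_range_succ, hai]
          omega
        have hym : y % 2 ^ (i + 1) < 2 ^ i := by
          rw [hydef, modpow b hb T (i + 1) (by omega), Finset.sum_range_succ, hbi]
          simpa using lt_two_pow_sum b hb i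
        have hCm : C % 2 ^ (i + 1) < 2 ^ (i + 1) := Nat.mod_lt _ (pow_pos two_pos _)
        have hmod : x % 2 ^ (i + 1) = (y % 2 ^ (i + 1) + C % 2 ^ (i + 1)) % 2 ^ (i + 1) := by
          conv_lhs => rw [← hyC]
          rw [Nat.add_mod]
        have hsub : (y % 2 ^ (i + 1) + C % 2 ^ (i + 1)) % 2 ^ (i + 1)
            = y % 2 ^ (i + 1) + C % 2 ^ (i + 1) - 2 ^ (i + 1) := by
          rw [Nat.mod_eq_sub_mod hcond, Nat.mod_eq_of_lt (by omega)]
        have h2 : (2 : ℕ) ^ (i + 1) = 2 * 2 ^ i := by rw [pow_succ]; ring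
        omega
    have hunion : S.card + F.card ≤ T := by
      have hFsub : F ⊆ range T := by rw [hF]; exact Finset.filter_subset _ _
      have := Finset.card_le_card (Finset.union_subset hSsub hFsub)
      rw [Finset.card_union_of_disjoint hdisj] at this
      simpa using this
    have hScard : P.card ≤ S.card := by
      rw [hS, Finset.card_insert_of_notMem (by simp),
        Finset.card_image_of_injective _ (add_left_injective 1)]
      have hsub1 : P.filter (fun i => ¬ (i + 1 < T)) ⊆ {T - 1} := by
        intro i hi
        obtain ⟨hiP, hi1⟩ := mem_filter.mp hi
        have : i < T := mem_range.mp (mem_of_mem_filter i (hP ▸ hiP))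
        rw [mem_singleton]; omega
      have h1 : (P.filter (fun i => ¬ (i + 1 < T))).card ≤ 1 := by
        have := Finset.card_le_card hsub1
        simpa using this
      have h2 := Finset.card_filter_add_card_filter_not
        (s := P) (p := fun i => i + 1 < T)
      omega
    omega
  -- P.card = Q.card
  have hPQ : P.card = Q.card := by
    have da : ∑ i ∈ range T, a i = ((range T).filter (fun i => a i = 1)).card := by
      rw [Finset.card_filter]
      refine Finset.sum_congr rfl fun i _ => ?_
      rcases Nat.le_one_iff_eq_zero_or_eq_one.mp (ha i) with h | h <;> simp [h]
    have db : ∑ i ∈ range T, b i = ((range T).filter (fun i => b i = 1)).card := by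
      rw [Finset.card_filter]
      refine Finset.sum_congr rfl fun i _ => ?_
      rcases Nat.le_one_iff_eq_zero_or_eq_one.mp (hb i) with h | h <;> simp [h]
    have hsa : ((range T).filter (fun i => a i = 1)).card
        = P.card + ((range T).filter (fun i => a i = 1 ∧ b i = 1)).card := by
      rw [hP, ← Finset.card_union_of_disjoint (by
        rw [Finset.disjoint_left]
        intro i h1 h2
        have := (mem_filter.mp h1).2
        have := (mem_filter.mp h2).2
        omega), ← Finset.filter_or]
      congr 1
      apply Finset.filter_congr
      intro i _
      have := hb i
      constructor
      · intro h; omega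
      · intro h; omega
    have hsb : ((range T).filter (fun i => b i = 1)).card
        = Q.card + ((range T).filter (fun i => a i = 1 ∧ b i = 1)).card := by
      rw [hQ, ← Finset.card_union_of_disjoint (by
        rw [Finset.disjoint_left]
        intro i h1 h2
        have := (mem_filter.mp h1).2
        have := (mem_filter.mp h2).2
        omega), ← Finset.filter_or]
      congr 1
      apply Finset.filter_congr
      intro i _
      have := ha i
      constructor
      · intro h; omega
      · intro h; omega
    omega
  -- D = P.card + Q.card
  have hD : ((range T).filter (fun i => a i ≠ b i)).card = P.card + Q.card := by
    rw [hP, hQ, ← Finset.card_union_of_disjoint (by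
      rw [Finset.disjoint_left]
      intro i h1 h2
      have := (mem_filter.mp h1).2
      have := (mem_filter.mp h2).2
      omega), ← Finset.filter_or]
    congr 1
    apply Finset.filter_congr
    intro i _
    have := ha i
    have := hb i
    constructor
    · intro h; omega
    · intro h; omega
  constructor <;> omega

/-- For any `T`-periodic binary sequence `s : ℕ → ZMod 2` and any shift
`0 ≤ τ < T`, the arithmetic autocorrelation is bounded by the classical one:
`|A^A_s(τ)| = |T - 2 N₁| ≤ (T + A_s(τ))/2`, where
`A_s(τ) = Σ_{i<T} (-1)^(s i + s (i+τ))` and `N₁` is the number of `k < T` whose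
`k`-th binary digit of `|A - B|` equals `1`, with `A = Σ_{i<T} m i · 2^i`,
`B = Σ_{i<T} m (i+τ) · 2^i`, `m i = (s i).val ∈ {0,1} ⊆ ℤ`.
(Note `T + A_s(τ) = 2(T - D)` with `D = #{i < T : s i ≠ s (i+τ)}`, so the
division is exact.) -/
theorem arithmetic_autocorrelation_le_classical (T : ℕ) (hT : 1 ≤ T)
    (s : ℕ → ZMod 2) (hper : ∀ i, s (i + T) = s i) :
    ∀ τ, τ < T →
      |(T : ℤ) - 2 * ((Finset.range T).filter
          (fun k => ((∑ i ∈ Finset.range T, ((s i).val : ℤ) * 2 ^ i)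
            - ∑ i ∈ Finset.range T, ((s (i + τ)).val : ℤ) * 2 ^ i).natAbs.testBit k
              = true)).card|
        ≤ ((T : ℤ) + ∑ i ∈ Finset.range T, (-1 : ℤ) ^ (s i + s (i + τ)).val) / 2 := by
  intro τ hτ
  have ha : ∀ i, (s i).val ≤ 1 := by
    intro i
    have := ZMod.val_lt (s i)
    omega
  -- shift sum equality
  have hshift : ∑ i ∈ range T, (s (i + τ)).val = ∑ i ∈ range T, (s i).val := by
    have h1 : ∑ i ∈ range T, (s (i + τ)).val = ∑ i ∈ Ico τ (T + τ), (s i).val := by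
      rw [Finset.sum_Ico_eq_sum_range]
      simp only [Nat.add_sub_cancel]
      exact Finset.sum_congr rfl fun i _ => by rw [add_comm]
    have h2 : ∑ i ∈ Ico τ (T + τ), (s i).val
        = (∑ i ∈ Ico τ T, (s i).val) + ∑ i ∈ Ico T (T + τ), (s i).val := by
      rw [Finset.sum_Ico_consecutive _ hτ.le (Nat.le_add_right T τ)]
    have h3 : ∑ i ∈ Ico T (T + τ), (s i).val = ∑ i ∈ range τ, (s i).val := by
      rw [Finset.sum_Ico_eq_sum_range]
      simp only [Nat.add_sub_cancel_left]
      refine Finset.sum_congr rfl fun i _ => ?_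
      rw [add_comm, hper]
    have h4 : (∑ i ∈ range τ, (s i).val) + ∑ i ∈ Ico τ T, (s i).val
        = ∑ i ∈ range T, (s i).val := Finset.sum_range_add_sum_Ico _ hτ.le
    omega
  -- the RHS equals T - D
  have hterm : ∀ u v : ZMod 2,
      ((-1 : ℤ)) ^ (u + v).val = 1 - 2 * (if u.val ≠ v.val then 1 else 0) := by decide
  have hRHS : (∑ i ∈ range T, (-1 : ℤ) ^ (s i + s (i + τ)).val)
      = (T : ℤ) - 2 * ((range T).filter (fun i => (s i).val ≠ (s (i + τ)).val)).card := by
    rw [show (∑ i ∈ range T, (-1 : ℤ) ^ (s i + s (i + τ)).val)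
        = ∑ i ∈ range T, (1 - 2 * (if (s i).val ≠ (s (i + τ)).val then (1 : ℤ) else 0)) from
      Finset.sum_congr rfl fun i _ => hterm _ _]
    rw [Finset.sum_sub_distrib, Finset.sum_const, ← Finset.mul_sum, Finset.sum_boole]
    simp [mul_comm]
  rw [hRHS]
  have hdiveq : ((T : ℤ) + ((T : ℤ) - 2 * ((range T).filter
      (fun i => (s i).val ≠ (s (i + τ)).val)).card)) / 2
      = (T : ℤ) - ((range T).filter (fun i => (s i).val ≠ (s (i + τ)).val)).card := by
    have h2 : ((T : ℤ) + ((T : ℤ) - 2 * ((range T).filter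
        (fun i => (s i).val ≠ (s (i + τ)).val)).card))
        = 2 * ((T : ℤ) - ((range T).filter (fun i => (s i).val ≠ (s (i + τ)).val)).card) := by
      ring
    rw [h2, Int.mul_ediv_cancel_left _ (by norm_num)]
  rw [hdiveq]
  -- cast the sums
  set x := ∑ i ∈ range T, (s i).val * 2 ^ i with hxdef
  set y := ∑ i ∈ range T, (s (i + τ)).val * 2 ^ i with hydef
  have hAB : ((∑ i ∈ Finset.range T, ((s i).val : ℤ) * 2 ^ i)
      - ∑ i ∈ Finset.range T, ((s (i + τ)).val : ℤ) * 2 ^ i) = (x : ℤ) - (y : ℤ) := by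
    rw [hxdef, hydef]
    push_cast
    ring
  rcases le_or_gt y x with hxy | hxy
  · have h1 : ((x : ℤ) - (y : ℤ)).natAbs = x - y := by omega
    simp only [hAB, h1]
    have hk := key T hT (fun i => (s i).val) (fun i => (s (i + τ)).val)
      (fun i => ha i) (fun i => ha _) hshift.symm hxy
    simp only [← hxdef, ← hydef] at hk
    obtain ⟨k1, k2⟩ := hk
    rw [abs_le]
    constructor <;> [skip; skip] <;> push_cast <;> omega
  · have h1 : ((x : ℤ) - (y : ℤ)).natAbs = y - x := by omega
    simp only [hAB, h1]
    have hk := key T hT (fun i => (s (i + τ)).val) (fun i => (s i).val)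
      (fun i => ha _) (fun i => ha i) hshift hxy.le
    simp only [← hxdef, ← hydef] at hk
    obtain ⟨k1, k2⟩ := hk
    have hDD : ((range T).filter (fun i => (s (i + τ)).val ≠ (s i).val)).card
        = ((range T).filter (fun i => (s i).val ≠ (s (i + τ)).val)).card := by
      congr 1
      apply Finset.filter_congr
      intro i _
      exact ne_comm
    rw [hDD] at k1 k2
    rw [abs_le]
    constructor <;> [skip; skip] <;> push_cast <;> omega
end
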